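/- arXiv:2212.09954 — 4 statements merged into one kernel-verified Lean document; each statement's English description precedes it below -/
import Mathlib

section
/- Let f : ℝ^d → ℝ ∪ {+∞} be a closed convex function with D := int(dom f) ≠ ∅, let j ∈ {1,…,d}, and let A be a closed set in ℝ^d containing range ∇f. Then Σ^j(∂f) ∩ D = Σ^j(∂̄f) ∩ D = Σ^j_A(∂f) ∩ D, and Σ^j(∂̄f) ⊂ Σ^j_A(∂f). -/
open Filter Topology Set Pointwise
open scoped RealInnerProductSpace

noncomputable section

abbrev Euc (d : ℕ) := EuclideanSpace ℝ (Fin d)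

/-- A proper lower-semicontinuous (closed) convex function with values in `ℝ ∪ {+∞}`. -/
def ClosedConvexFun {d : ℕ} (f : Euc d → EReal) : Prop :=
  LowerSemicontinuous f ∧ (∀ x, f x ≠ ⊥) ∧ (∃ x, f x ≠ ⊤) ∧
    ∀ x y : Euc d, ∀ a b : ℝ, 0 ≤ a → 0 ≤ b → a + b = 1 →
      f (a • x + b • y) ≤ (a : EReal) * f x + (b : EReal) * f y

/-- Subdifferential of an `EReal`-valued function. -/
def subdiff {d : ℕ} (f : Euc d → EReal) (x : Euc d) : Set (Euc d) :=
  {y | ∀ z : Euc d, ((⟪z, y⟫ : ℝ) : EReal) + f x ≤ f (x + z)}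

/-- Convex conjugate. -/
def fconj {d : ℕ} (f : Euc d → EReal) (y : Euc d) : EReal :=
  ⨆ x : Euc d, ((⟪x, y⟫ : ℝ) : EReal) - f x

/-- The function `f_A(x) = sup_{y ∈ A} (⟨x,y⟩ - f*(y))`. -/
def restrSup {d : ℕ} (f : Euc d → EReal) (A : Set (Euc d)) (x : Euc d) : EReal :=
  ⨆ y ∈ A, (((⟪x, y⟫ : ℝ) : EReal) - fconj f y)

/-- `Arg_A(x) = argmax_{y ∈ A} (⟨x,y⟩ - f*(y))`. -/
def argMaxOn {d : ℕ} (f : Euc d → EReal) (A : Set (Euc d)) (x : Euc d) : Set (Euc d) :=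
  {y ∈ A | ∀ z ∈ A, ((⟪x, z⟫ : ℝ) : EReal) - fconj f z ≤ ((⟪x, y⟫ : ℝ) : EReal) - fconj f y}

/-- Linear growth: `|g x| ≤ K (1 + |x|)`. -/
def LinGrowth {k : ℕ} (g : Euc k → ℝ) : Prop :=
  ∃ K > 0, ∀ x, |g x| ≤ K * (1 + ‖x‖)

/-- `x^{-j}`: delete the `j`-th coordinate. -/
def dropCoord {d : ℕ} (j : Fin (d + 1)) (x : Euc (d + 1)) : Euc d :=
  WithLp.toLp 2 (fun i => x (j.succAbove i))

/-- The class `H^j_C`. -/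
def MemH {d : ℕ} (j : Fin (d + 1)) (C : Set (Euc (d + 1))) (h : Euc (d + 1) → ℝ) : Prop :=
  ∃ g₁ g₂ : Euc d → ℝ, ConvexOn ℝ Set.univ g₁ ∧ ConvexOn ℝ Set.univ g₂ ∧
    LinGrowth g₁ ∧ LinGrowth g₂ ∧
    (∀ x : Euc (d + 1), h x = x j + g₁ (dropCoord j x) - g₂ (dropCoord j x)) ∧
    ∀ x : Euc (d + 1), DifferentiableAt ℝ g₁ (dropCoord j x) →
      DifferentiableAt ℝ g₂ (dropCoord j x) → gradient h x ∈ C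

/-- `θ^j(C) = {y / y^j : y ∈ C}`. -/
def theta {d : ℕ} (j : Fin d) (C : Set (Euc d)) : Set (Euc d) :=
  (fun y => (y j)⁻¹ • y) '' C

/-- `w` is a regular normal to `H` at `x`: `limsup_{H ∋ y → x} ⟨w, y-x⟩/|y-x| ≤ 0`. -/
def RegNormal {d : ℕ} (H : Set (Euc d)) (x w : Euc d) : Prop :=
  ∀ ε > 0, ∃ δ > 0, ∀ y ∈ H, y ≠ x → ‖y - x‖ < δ → ⟪w, y - x⟫ ≤ ε * ‖y - x‖

/-- `w` is a normal vector to `H` at `x`. -/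
def NormalVec {d : ℕ} (H : Set (Euc d)) (x w : Euc d) : Prop :=
  ∃ xs ws : ℕ → Euc d, (∀ n, xs n ∈ H ∧ RegNormal H (xs n) (ws n)) ∧
    Tendsto xs atTop (𝓝 x) ∧ Tendsto ws atTop (𝓝 w)

/-- Effective domain `{x | f x < ∞}`. -/
def effDom {d : ℕ} (f : Euc d → EReal) : Set (Euc d) := {x | f x ≠ ⊤}

/-- Real part of an `EReal`-valued function. -/
def toRealFun {d : ℕ} (f : Euc d → EReal) : Euc d → ℝ := fun x => (f x).toReal

/-- Points of `int (dom f)` where `f` is differentiable. -/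
def domGrad {d : ℕ} (f : Euc d → EReal) : Set (Euc d) :=
  {x | x ∈ interior (effDom f) ∧ DifferentiableAt ℝ (toRealFun f) x}

/-- `range ∇f`. -/
def gradRange {d : ℕ} (f : Euc d → EReal) : Set (Euc d) :=
  (fun x => gradient (toRealFun f) x) '' domGrad f

/-- Clarke-type subdifferential `∂̄f(x)`. -/
def clarke {d : ℕ} (f : Euc d → EReal) (x : Euc d) : Set (Euc d) :=
  closure (convexHull ℝ
    {v | ∃ xs : ℕ → Euc d, (∀ n, xs n ∈ domGrad f) ∧ Tendsto xs atTop (𝓝 x) ∧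
      Tendsto (fun n => gradient (toRealFun f) (xs n)) atTop (𝓝 v)})

/-- Singular set `Σ^j_A(Ψ)`. -/
def SigmaJ {d : ℕ} (Ψ : Euc d → Set (Euc d)) (j : Fin d) (A : Set (Euc d)) : Set (Euc d) :=
  {x | ∃ y₁ ∈ Ψ x ∩ A, ∃ y₂ ∈ Ψ x ∩ A, y₁ j ≠ y₂ j}

/-- The bilinear form `S(x,y) = ∑ x^i S^{ij} y^j`. -/
def Sbil {d : ℕ} (S : Matrix (Fin d) (Fin d) ℝ) (x y : Euc d) : ℝ :=
  ∑ i, ∑ k, x i * S i k * y k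

/-- Matrix acting on a vector. -/
def matVec {d : ℕ} (M : Matrix (Fin d) (Fin d) ℝ) (y : Euc d) : Euc d :=
  WithLp.toLp 2 (fun i => ∑ k, M i k * y k)

/-- Fitzpatrick function `ψ_G(x) = sup_{y ∈ G}(S(x,y) - S(y,y)/2)`. -/
def fitz {d : ℕ} (S : Matrix (Fin d) (Fin d) ℝ) (G : Set (Euc d)) (x : Euc d) : EReal :=
  ⨆ y ∈ G, ((Sbil S x y - Sbil S y y / 2 : ℝ) : EReal)

/-- `S`-monotone set. -/
def SMonotone {d : ℕ} (S : Matrix (Fin d) (Fin d) ℝ) (G : Set (Euc d)) : Prop :=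
  ∀ x ∈ G, ∀ y ∈ G, 0 ≤ Sbil S (x - y) (x - y)

/-- Projection `P_G(x) = argmin_{y ∈ G} S(x-y, x-y)`. -/
def proj {d : ℕ} (S : Matrix (Fin d) (Fin d) ℝ) (G : Set (Euc d)) (x : Euc d) : Set (Euc d) :=
  {y ∈ G | ∀ z ∈ G, Sbil S (x - y) (x - y) ≤ Sbil S (x - z) (x - z)}

/-- `S`-regular normal vector. -/
def SRegNormal {d : ℕ} (S : Matrix (Fin d) (Fin d) ℝ) (H : Set (Euc d)) (x w : Euc d) : Prop :=
  ∀ ε > 0, ∃ δ > 0, ∀ y ∈ H, y ≠ x → ‖y - x‖ < δ → Sbil S w (y - x) ≤ ε * ‖y - x‖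

/-- `S`-normal vector. -/
def SNormal {d : ℕ} (S : Matrix (Fin d) (Fin d) ℝ) (H : Set (Euc d)) (x w : Euc d) : Prop :=
  ∃ xs ws : ℕ → Euc d, (∀ n, xs n ∈ H ∧ SRegNormal S H (xs n) (ws n)) ∧
    Tendsto xs atTop (𝓝 x) ∧ Tendsto ws atTop (𝓝 w)

/-- First-order singular set `Σ₁^j(P_G)`. -/
def Sigma1J {d : ℕ} (S : Matrix (Fin d) (Fin d) ℝ) (G : Set (Euc d)) (j : Fin d) :
    Set (Euc d) :=
  {x | ∃ y₁ ∈ proj S G x, ∃ y₂ ∈ proj S G x,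
    0 < Sbil S (y₁ - y₂) (y₁ - y₂) ∧ y₁ j ≠ y₂ j}

/-- Zero-order singular set `Σ̄₀^j(P_G)`. -/
def Sigma0J {d : ℕ} (S : Matrix (Fin d) (Fin d) ℝ) (G : Set (Euc d)) (j : Fin d) :
    Set (Euc d) :=
  {x | ∃ y₁ ∈ proj S G x, ∃ y₂ ∈ proj S G x,
    Sbil S (y₁ - y₂) (y₁ - y₂) = 0 ∧ y₁ j ≠ y₂ j}

/-- The canonical bilinear form of index `m` on `ℝ^m × ℝ^k`. -/
def Lam {m k : ℕ} (p q : Euc m × Euc k) : ℝ := ⟪p.1, q.1⟫ - ⟪p.2, q.2⟫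


/-!
Let `∇*f(x)` (`reachableGrad f x`) be the set of limits of gradients `∇f(xₙ)` with `xₙ → x`.
Because `f` is lower semicontinuous the graph of `∂f` is closed, so `∇*f(x) ⊆ ∂f(x) ∩ A`; and
`∂̄f(x)` is the closed convex hull of `∇*f(x)`, so a coordinate that varies on `∂̄f(x)` already
varies on `∇*f(x)`.

Conversely let `x ∈ D`, `w ∈ ∂f(x)` and `e` a direction. `f` is locally Lipschitz on `D`, so by
Rademacher's theorem its differentiability points are dense there: we can reach `x` through
differentiability points `zₙ = x + tₙ (e + o(1))`, `tₙ ↓ 0`, where the gradients stay bounded.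
Monotonicity of `∂f` gives `⟪zₙ - x, ∇f(zₙ) - w⟫ ≥ 0`; dividing by `tₙ` and passing to a limit
`v ∈ ∇*f(x)` yields `⟪e, w⟫ ≤ ⟪e, v⟫`. With `e = ±eⱼ`, a coordinate that varies on `∂f(x)`
varies on `∇*f(x)`. So on `D` all three singular sets equal the singular set of `∇*f`.
-/

section NormedSpace

variable {E F : Type*} [NormedAddCommGroup E] [NormedSpace ℝ E]
  [NormedAddCommGroup F] [NormedSpace ℝ F]

lemma exists_seq_mem_tendsto_inv_smul_sub {S : Set E} {x : E} (hS : closure S ∈ 𝓝 x) (e : E) :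
    ∃ t : ℕ → ℝ, ∃ z : ℕ → E, (∀ n, 0 < t n ∧ z n ∈ S) ∧ Tendsto t atTop (𝓝 0) ∧
      Tendsto (fun n => (t n)⁻¹ • (z n - x)) atTop (𝓝 e) := by
  have hline : ∀ᶠ s in 𝓝[>] (0 : ℝ), x + s • e ∈ closure S := by
    have : Tendsto (fun s : ℝ => x + s • e) (𝓝 0) (𝓝 x) := by
      simpa using (by fun_prop : Continuous fun s : ℝ => x + s • e).tendsto 0
    exact (this.eventually hS).filter_mono nhdsWithin_le_nhds
  have hpick : ∀ n : ℕ, ∃ s : ℝ, (0 < s ∧ s < 1 / (n + 1)) ∧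
      ∃ z ∈ S, ‖s⁻¹ • (z - x) - e‖ < 1 / (n + 1) := by
    intro n
    obtain ⟨s, hs, hs0, hs1⟩ :=
      (hline.and (Ioo_mem_nhdsGT (show (0 : ℝ) < 1 / (n + 1) by positivity))).exists
    obtain ⟨z, hz, hzs⟩ := Metric.mem_closure_iff.1 hs (s / (n + 1)) (by positivity)
    refine ⟨s, ⟨hs0, hs1⟩, z, hz, ?_⟩
    have : s⁻¹ • (z - x) - e = s⁻¹ • (z - (x + s • e)) := by
      simp only [smul_sub, smul_add, inv_smul_smul₀ hs0.ne']; abel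
    rw [this, norm_smul, norm_inv, Real.norm_of_nonneg hs0.le, ← dist_eq_norm, dist_comm,
      inv_mul_lt_iff₀ hs0, mul_one_div]
    exact hzs
  choose t ht z hz hzt using hpick
  have hlim := tendsto_one_div_add_atTop_nhds_zero_nat (𝕜 := ℝ)
  refine ⟨t, z, fun n => ⟨(ht n).1, hz n⟩, ?_, ?_⟩
  · exact squeeze_zero (fun n => (ht n).1.le) (fun n => (ht n).2.le) hlim
  · exact tendsto_iff_norm_sub_tendsto_zero.2
      (squeeze_zero (fun n => norm_nonneg _) (fun n => (hzt n).le) hlim)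

lemma LocallyLipschitzOn.eventually_norm_fderiv_le {U : Set E} {g : E → F}
    (hg : LocallyLipschitzOn U g) (hU : IsOpen U) {x : E} (hx : x ∈ U) :
    ∃ K : ℝ, ∀ᶠ z in 𝓝 x, ‖fderiv ℝ g z‖ ≤ K := by
  obtain ⟨K, t, ht, hK⟩ := hg hx
  rw [hU.nhdsWithin_eq hx] at ht
  exact ⟨K, (eventually_eventually_nhds.2 ht).mono fun z hz =>
    norm_fderiv_le_of_lipschitzOn ℝ hz hK⟩

lemma LocallyLipschitzOn.subset_closure_differentiableAt [FiniteDimensional ℝ E]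
    [FiniteDimensional ℝ F] {U : Set E} {g : E → F}
    (hg : LocallyLipschitzOn U g) (hU : IsOpen U) :
    U ⊆ closure {x | x ∈ U ∧ DifferentiableAt ℝ g x} := by
  borelize E
  intro x hx
  obtain ⟨K, t, ht, hK⟩ := hg hx
  rw [hU.nhdsWithin_eq hx] at ht
  have hdense := MeasureTheory.Measure.dense_of_ae
    (hK.ae_differentiableWithinAt_of_mem (μ := MeasureTheory.Measure.addHaar))
  rw [mem_closure_iff_nhds]
  intro V hV
  obtain ⟨y, ⟨hyVt, hyU⟩, hy⟩ := hdense.inter_open_nonempty (interior (V ∩ t) ∩ U)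
    (isOpen_interior.inter hU) ⟨x, mem_interior_iff_mem_nhds.2 (inter_mem hV ht), hx⟩
  have hVt : V ∩ t ∈ 𝓝 y := mem_interior_iff_mem_nhds.1 hyVt
  have ht_y : t ∈ 𝓝 y := mem_of_superset hVt inter_subset_right
  exact ⟨y, (mem_of_mem_nhds hVt).1, hyU, (hy (mem_of_mem_nhds ht_y)).differentiableAt ht_y⟩

lemma exists_ne_of_mem_closure_convexHull {S : Set E} (ℓ : E →L[ℝ] ℝ) {y₁ y₂ : E}
    (h₁ : y₁ ∈ closure (convexHull ℝ S)) (h₂ : y₂ ∈ closure (convexHull ℝ S))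
    (hne : ℓ y₁ ≠ ℓ y₂) : ∃ v₁ ∈ S, ∃ v₂ ∈ S, ℓ v₁ ≠ ℓ v₂ := by
  by_contra! hconst
  obtain ⟨v₀, hv₀⟩ := convexHull_nonempty_iff.1 (closure_nonempty_iff.1 ⟨y₁, h₁⟩)
  have hsub : closure (convexHull ℝ S) ⊆ {y | ℓ y = ℓ v₀} :=
    closure_minimal (convexHull_min (fun v hv => hconst v hv v₀ hv₀)
      (convex_hyperplane ℓ.isLinear _)) (isClosed_eq ℓ.continuous continuous_const)
  exact hne ((hsub h₁).trans (hsub h₂).symm)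

end NormedSpace

lemma ConvexOn.inner_gradient_le {E : Type*} [NormedAddCommGroup E] [InnerProductSpace ℝ E]
    [CompleteSpace E] {s : Set E} {g : E → ℝ} (hg : ConvexOn ℝ s g) {x y : E} (hx : x ∈ s)
    (hy : y ∈ s) (hd : DifferentiableAt ℝ g x) : ⟪y - x, gradient g x⟫ ≤ g y - g x := by
  have hline : HasDerivAt (g ∘ AffineMap.lineMap (k := ℝ) x y) ⟪y - x, gradient g x⟫ 0 := by
    have := hd.hasGradientAt.hasFDerivAt.comp_hasDerivAt_of_eq (0 : ℝ)
      (AffineMap.hasDerivAt_lineMap (b := y)) (AffineMap.lineMap_apply_zero _ _).symm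
    simpa [real_inner_comm] using this
  have := (hg.comp_affineMap (AffineMap.lineMap x y)).le_slope_of_hasDerivAt
    (by simpa using hx) (by simpa using hy) zero_lt_one hline
  simpa [slope_def_field] using this

lemma sigmaJ_mono {d : ℕ} {Ψ Φ : Euc d → Set (Euc d)} {j : Fin d} {A B : Set (Euc d)}
    (h : ∀ x, Ψ x ∩ A ⊆ Φ x ∩ B) : SigmaJ Ψ j A ⊆ SigmaJ Φ j B := by
  rintro x ⟨y₁, h₁, y₂, h₂, hne⟩
  exact ⟨y₁, h x h₁, y₂, h x h₂, hne⟩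

lemma mem_subdiff_of_tendsto {d : ℕ} {f : Euc d → EReal} (hf : LowerSemicontinuous f)
    {x v : Euc d} {z w : ℕ → Euc d} (hw : ∀ n, w n ∈ subdiff f (z n))
    (hz : Tendsto z atTop (𝓝 x)) (hv : Tendsto w atTop (𝓝 v)) : v ∈ subdiff f x := by
  intro u
  by_contra! hlt
  obtain ⟨c, hc, hcx⟩ := EReal.lt_iff_exists_real_btwn.1 hlt
  obtain ⟨c', hc', hc'c⟩ := EReal.lt_iff_exists_real_btwn.1 hc
  have hfx : ((c - ⟪u, v⟫ : ℝ) : EReal) < f x := by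
    rw [EReal.coe_sub]; exact EReal.sub_lt_of_lt_add' hcx
  have hbound : ∀ᶠ n in atTop, ⟪x + u - z n, w n⟫ ≤ c' - c + ⟪u, v⟫ := by
    filter_upwards [hz.eventually (hf x _ hfx)] with n hn
    have hsub := hw n (x + u - z n)
    rw [add_sub_cancel] at hsub
    have : ((⟪x + u - z n, w n⟫ + (c - ⟪u, v⟫) : ℝ) : EReal) < c' := by
      rw [EReal.coe_add]
      exact ((EReal.add_lt_add_left_coe hn _).trans_le hsub).trans hc'
    have := EReal.coe_lt_coe_iff.1 this
    linarith
  have hlim : Tendsto (fun n => ⟪x + u - z n, w n⟫) atTop (𝓝 ⟪u, v⟫) := by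
    simpa using ((tendsto_const_nhds (x := x + u)).sub hz).inner hv
  have := le_of_tendsto hlim hbound
  linarith [EReal.coe_lt_coe_iff.1 hc'c]

section ClosedConvexFun

open Metric

variable {d : ℕ} {f : Euc d → EReal}

def reachableGrad (f : Euc d → EReal) (x : Euc d) : Set (Euc d) :=
  {v | ∃ xs : ℕ → Euc d, (∀ n, xs n ∈ domGrad f) ∧ Tendsto xs atTop (𝓝 x) ∧
      Tendsto (fun n => gradient (toRealFun f) (xs n)) atTop (𝓝 v)}

lemma ClosedConvexFun.coe_toRealFun (hf : ClosedConvexFun f) {x : Euc d} (hx : x ∈ effDom f) :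
    ((toRealFun f x : ℝ) : EReal) = f x :=
  EReal.coe_toReal hx (hf.2.1 x)

lemma ClosedConvexFun.convexOn_toRealFun (hf : ClosedConvexFun f) :
    ConvexOn ℝ (effDom f) (toRealFun f) := by
  have hcomb : ∀ x ∈ effDom f, ∀ y ∈ effDom f, ∀ a b : ℝ, 0 ≤ a → 0 ≤ b → a + b = 1 →
      a • x + b • y ∈ effDom f ∧
        toRealFun f (a • x + b • y) ≤ a * toRealFun f x + b * toRealFun f y := by
    intro x hx y hy a b ha hb hab
    have h := hf.2.2.2 x y a b ha hb hab
    rw [← hf.coe_toRealFun hx, ← hf.coe_toRealFun hy, ← EReal.coe_mul, ← EReal.coe_mul,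
      ← EReal.coe_add] at h
    have hxy : a • x + b • y ∈ effDom f := ne_top_of_le_ne_top (EReal.coe_ne_top _) h
    rw [← hf.coe_toRealFun hxy] at h
    exact ⟨hxy, EReal.coe_le_coe_iff.1 h⟩
  exact ⟨fun x hx y hy a b ha hb hab => (hcomb x hx y hy a b ha hb hab).1,
    fun x hx y hy a b ha hb hab => (hcomb x hx y hy a b ha hb hab).2⟩

lemma ClosedConvexFun.inner_le_of_mem_subdiff (hf : ClosedConvexFun f) {x y w : Euc d}
    (hw : w ∈ subdiff f x) (hx : x ∈ effDom f) (hy : y ∈ effDom f) :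
    ⟪y - x, w⟫ ≤ toRealFun f y - toRealFun f x := by
  have h := hw (y - x)
  rw [add_sub_cancel, ← hf.coe_toRealFun hx, ← hf.coe_toRealFun hy, ← EReal.coe_add] at h
  linarith [EReal.coe_le_coe_iff.1 h]

lemma ClosedConvexFun.inner_sub_nonneg_of_mem_subdiff (hf : ClosedConvexFun f)
    {x y v w : Euc d} (hv : v ∈ subdiff f x) (hw : w ∈ subdiff f y) (hx : x ∈ effDom f)
    (hy : y ∈ effDom f) : 0 ≤ ⟪y - x, w - v⟫ := by
  have h₁ := hf.inner_le_of_mem_subdiff hv hx hy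
  have h₂ := hf.inner_le_of_mem_subdiff hw hy hx
  rw [← neg_sub y x, inner_neg_left] at h₂
  rw [inner_sub_right]
  linarith

lemma ClosedConvexFun.gradient_mem_subdiff (hf : ClosedConvexFun f) {z : Euc d}
    (hz : z ∈ domGrad f) : gradient (toRealFun f) z ∈ subdiff f z := by
  intro u
  by_cases hu : z + u ∈ effDom f
  · have hz' : z ∈ effDom f := interior_subset hz.1
    have h := hf.convexOn_toRealFun.inner_gradient_le hz' hu hz.2
    rw [add_sub_cancel_left] at h
    rw [← hf.coe_toRealFun hz', ← hf.coe_toRealFun hu, ← EReal.coe_add, EReal.coe_le_coe_iff]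
    linarith
  · rw [show f (z + u) = ⊤ from not_not.1 hu]
    exact le_top

lemma ClosedConvexFun.reachableGrad_subset_subdiff (hf : ClosedConvexFun f) (x : Euc d) :
    reachableGrad f x ⊆ subdiff f x := by
  rintro v ⟨xs, hxs, hx, hv⟩
  exact mem_subdiff_of_tendsto hf.1 (fun n => hf.gradient_mem_subdiff (hxs n)) hx hv

lemma reachableGrad_subset_of_isClosed {A : Set (Euc d)} (hA : IsClosed A)
    (hrange : gradRange f ⊆ A) (x : Euc d) : reachableGrad f x ⊆ A := by
  rintro v ⟨xs, hxs, -, hv⟩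
  exact hA.mem_of_tendsto hv (Eventually.of_forall fun n => hrange ⟨xs n, hxs n, rfl⟩)

lemma ClosedConvexFun.exists_mem_reachableGrad_inner_le (hf : ClosedConvexFun f) {x w : Euc d}
    (hx : x ∈ interior (effDom f)) (hw : w ∈ subdiff f x) (e : Euc d) :
    ∃ v ∈ reachableGrad f x, ⟪e, w⟫ ≤ ⟪e, v⟫ := by
  set g := toRealFun f
  have hlip : LocallyLipschitzOn (interior (effDom f)) g :=
    hf.convexOn_toRealFun.locallyLipschitzOn_interior
  have hdense : closure (domGrad f) ∈ 𝓝 x := mem_of_superset (isOpen_interior.mem_nhds hx)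
    (hlip.subset_closure_differentiableAt isOpen_interior)
  obtain ⟨t, z, htz, ht, hze⟩ := exists_seq_mem_tendsto_inv_smul_sub hdense e
  have hzx : Tendsto z atTop (𝓝 x) := by
    refine tendsto_sub_nhds_zero_iff.1 ?_
    have := ht.smul hze
    rw [zero_smul] at this
    exact this.congr fun n => smul_inv_smul₀ (htz n).1.ne' _
  obtain ⟨K, hK⟩ := hlip.eventually_norm_fderiv_le isOpen_interior hx
  have hbdd : ∀ᶠ n in atTop, gradient g (z n) ∈ closedBall 0 K :=
    (hzx.eventually hK).mono fun n hn => by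
      rwa [mem_closedBall_zero_iff, gradient, LinearIsometryEquiv.norm_map]
  obtain ⟨v, -, φ, hφ, hv⟩ := tendsto_subseq_of_frequently_bounded isBounded_closedBall
    hbdd.frequently
  refine ⟨v, ⟨z ∘ φ, fun n => (htz _).2, hzx.comp hφ.tendsto_atTop, hv⟩, ?_⟩
  have hmono : ∀ n, 0 ≤ ⟪(t n)⁻¹ • (z n - x), gradient g (z n) - w⟫ := fun n => by
    rw [real_inner_smul_left]
    exact mul_nonneg (inv_nonneg.2 (htz n).1.le) (hf.inner_sub_nonneg_of_mem_subdiff hw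
      (hf.gradient_mem_subdiff (htz n).2) (interior_subset hx) (interior_subset (htz n).2.1))
  have hlim : Tendsto (fun n => ⟪(t (φ n))⁻¹ • (z (φ n) - x), gradient g (z (φ n)) - w⟫)
      atTop (𝓝 ⟪e, v - w⟫) :=
    (hze.comp hφ.tendsto_atTop).inner (hv.sub_const w)
  have := ge_of_tendsto' hlim fun n => hmono (φ n)
  rw [inner_sub_right] at this
  linarith

lemma sigmaJ_clarke_subset (j : Fin d) :
    SigmaJ (clarke f) j univ ⊆ SigmaJ (reachableGrad f) j univ := by
  rintro x ⟨y₁, ⟨h₁, -⟩, y₂, ⟨h₂, -⟩, hne⟩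
  obtain ⟨v₁, hv₁, v₂, hv₂, hv⟩ :=
    exists_ne_of_mem_closure_convexHull (EuclideanSpace.proj j) h₁ h₂ (by simpa using hne)
  exact ⟨v₁, ⟨hv₁, mem_univ _⟩, v₂, ⟨hv₂, mem_univ _⟩, by simpa using hv⟩

lemma ClosedConvexFun.sigmaJ_subdiff_inter_interior_subset (hf : ClosedConvexFun f)
    (j : Fin d) :
    SigmaJ (subdiff f) j univ ∩ interior (effDom f) ⊆ SigmaJ (reachableGrad f) j univ := by
  rintro x ⟨⟨y₁, ⟨h₁, -⟩, y₂, ⟨h₂, -⟩, hne⟩, hx⟩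
  wlog hlt : y₁ j < y₂ j generalizing y₁ y₂
  · exact this y₂ h₂ y₁ hne.symm h₁ (hne.symm.lt_of_le (not_lt.1 hlt))
  obtain ⟨v₁, hv₁, hle₁⟩ :=
    hf.exists_mem_reachableGrad_inner_le hx h₁ (-EuclideanSpace.single j 1)
  obtain ⟨v₂, hv₂, hle₂⟩ :=
    hf.exists_mem_reachableGrad_inner_le hx h₂ (EuclideanSpace.single j 1)
  simp only [inner_neg_left, EuclideanSpace.inner_single_left, map_one, one_mul,
    neg_le_neg_iff] at hle₁ hle₂
  exact ⟨v₁, ⟨hv₁, mem_univ _⟩, v₂, ⟨hv₂, mem_univ _⟩, ((hle₁.trans_lt hlt).trans_le hle₂).ne⟩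

end ClosedConvexFun

theorem stmt9_general {d : ℕ} (f : Euc d → EReal) (hf : ClosedConvexFun f)
    (j : Fin d)
    (A : Set (Euc d)) (hA : IsClosed A) (hrange : gradRange f ⊆ A) :
    SigmaJ (subdiff f) j Set.univ ∩ interior (effDom f) =
      SigmaJ (clarke f) j Set.univ ∩ interior (effDom f) ∧
    SigmaJ (clarke f) j Set.univ ∩ interior (effDom f) =
      SigmaJ (subdiff f) j A ∩ interior (effDom f) ∧
    SigmaJ (clarke f) j Set.univ ⊆ SigmaJ (subdiff f) j A := by
  set D := interior (effDom f)
  set R := SigmaJ (reachableGrad f) j univ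
  have hclarke_R : SigmaJ (clarke f) j univ ⊆ R := sigmaJ_clarke_subset j
  have hR_A : R ⊆ SigmaJ (subdiff f) j A := sigmaJ_mono fun x =>
    subset_inter (inter_subset_left.trans (hf.reachableGrad_subset_subdiff x))
      (inter_subset_left.trans (reachableGrad_subset_of_isClosed hA hrange x))
  have hR_clarke : R ⊆ SigmaJ (clarke f) j univ := sigmaJ_mono fun x =>
    inter_subset_inter_left _ ((subset_convexHull ℝ _).trans subset_closure)
  have hA_univ : SigmaJ (subdiff f) j A ⊆ SigmaJ (subdiff f) j univ :=
    sigmaJ_mono fun x => inter_subset_inter_right _ (subset_univ A)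
  have hsubdiff : SigmaJ (subdiff f) j univ ∩ D = R ∩ D :=
    (subset_inter (hf.sigmaJ_subdiff_inter_interior_subset j) inter_subset_right).antisymm
      (inter_subset_inter_left _ (hR_A.trans hA_univ))
  have hclarke : SigmaJ (clarke f) j univ ∩ D = R ∩ D :=
    (inter_subset_inter_left _ hclarke_R).antisymm (inter_subset_inter_left _ hR_clarke)
  have hsubdiffA : SigmaJ (subdiff f) j A ∩ D = R ∩ D :=
    ((inter_subset_inter_left _ hA_univ).trans hsubdiff.subset).antisymm
      (inter_subset_inter_left _ hR_A)
  exact ⟨hsubdiff.trans hclarke.symm, hclarke.trans hsubdiffA.symm,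
    hclarke_R.trans hR_A⟩

/-- Theorem 2 of the paper, first part. -/
theorem stmt9 {d : ℕ} (f : Euc d → EReal) (hf : ClosedConvexFun f)
    (hD : (interior (effDom f)).Nonempty) (j : Fin d)
    (A : Set (Euc d)) (hA : IsClosed A) (hrange : gradRange f ⊆ A) :
    SigmaJ (subdiff f) j Set.univ ∩ interior (effDom f) =
      SigmaJ (clarke f) j Set.univ ∩ interior (effDom f) ∧
    SigmaJ (clarke f) j Set.univ ∩ interior (effDom f) =
      SigmaJ (subdiff f) j A ∩ interior (effDom f) ∧
    SigmaJ (clarke f) j Set.univ ⊆ SigmaJ (subdiff f) j A :=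
  stmt9_general f hf j A hA hrange

end
end

section
/- Let f : ℝ^d → ℝ ∪ {+∞} be a closed convex function with int(dom f) ≠ ∅. Then {(y, f*(y)) : y ∈ range ∇f} is exactly the set of exposed points of the epigraph of the convex conjugate f*. -/
/-!
For `x₀ ∈ dom f`, Fenchel–Young gives `⟪x₀, y⟫ - f x₀ ≤ f* y` for all `y`, with equality exactly
for `y ∈ ∂f(x₀)`. An exposing normal of `epi f*` at `(y₀, s₀)` has positive last coordinate, so it
may be normalised to `(-x₀, 1)`; exposedness then says that the affine function
`y ↦ s₀ + ⟪y - y₀, x₀⟫` minorizes `f*` and touches it only at `y₀`. By Fenchel–Moreau this holds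
iff `x₀ ∈ dom f` and `∂f(x₀) = {y₀}`. So the theorem reduces to: a closed convex function has
exactly one subgradient at `x₀` iff `x₀ ∈ int (dom f)` and `f` is differentiable at `x₀`.
At a boundary point of the domain, an outer normal of the domain can be added to any subgradient.
At an interior point, separating the strict epigraph from a line through `(x₀, f x₀)` whose slope
lies between the one-sided directional derivatives yields a subgradient with that slope; so a
unique subgradient makes all directional derivatives linear, and a locally Lipschitz function with
linear directional derivatives on a finite-dimensional space is differentiable.
-/

open Filter Topology Set Pointwise
open scoped RealInnerProductSpace

noncomputable section

open InnerProductSpace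

theorem ConvexOn.add_mul_le_of_leftDeriv_le_of_le_rightDeriv {S : Set ℝ} {φ : ℝ → ℝ} {x y m : ℝ}
    (hφ : ConvexOn ℝ S φ) (hx : x ∈ interior S) (hy : y ∈ S)
    (hl : derivWithin φ (Iio x) x ≤ m) (hr : m ≤ derivWithin φ (Ioi x) x) :
    φ x + (y - x) * m ≤ φ y := by
  rcases lt_trichotomy x y with hxy | rfl | hyx
  · have := hr.trans (hφ.rightDeriv_le_slope_of_mem_interior hx hy hxy)
    rw [slope_def_field, le_div_iff₀ (sub_pos.2 hxy)] at this
    linarith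
  · simp
  · have := (hφ.slope_le_leftDeriv_of_mem_interior hy hx hyx).trans hl
    rw [slope_def_field, div_le_iff₀ (sub_pos.2 hyx)] at this
    linarith

theorem LipschitzOnWith.hasFDerivAt_of_forall_hasLineDerivAt {E : Type*} [NormedAddCommGroup E]
    [NormedSpace ℝ E] [FiniteDimensional ℝ E] {f : E → ℝ} {K : NNReal} {s : Set E}
    {L : StrongDual ℝ E} {x : E} (hf : LipschitzOnWith K f s) (hs : s ∈ 𝓝 x)
    (hL : ∀ v, HasLineDerivAt ℝ f (L v) x v) : HasFDerivAt f L x := by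
  obtain ⟨F, hF, hfF⟩ := hf.extend_real
  have heq : F =ᶠ[𝓝 x] f := Filter.eventually_of_mem hs fun z hz => (hfF hz).symm
  exact (hF.hasFDerivAt_of_hasLineDerivAt_of_closure (s := univ) (by simp)
    fun v _ => (hL v).congr_of_eventuallyEq heq).congr_of_eventuallyEq heq.symm

section InnerProductSpace

variable {E : Type*} [NormedAddCommGroup E] [InnerProductSpace ℝ E]

theorem ContinuousLinearMap.exists_eq_inner_add_mul [CompleteSpace E] (ℓ : StrongDual ℝ (E × ℝ)) :
    ∃ (a : E) (c : ℝ), ∀ z r, ℓ (z, r) = ⟪z, a⟫ + c * r := by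
  refine ⟨(toDual ℝ E).symm (ℓ.comp (ContinuousLinearMap.inl ℝ E ℝ)), ℓ (0, 1), fun z r => ?_⟩
  have hvert : ℓ ((0 : E), r) = ℓ (0, 1) * r := by
    rw [show ((0 : E), r) = r • ((0 : E), (1 : ℝ)) by simp, map_smul, smul_eq_mul, mul_comm]
  rw [← ℓ.comp_inl_add_comp_inr, real_inner_comm, toDual_symm_apply]
  simpa using hvert

theorem exposed_point_epigraph_iff {φ : E → EReal} {p : E × ℝ} :
    (φ p.1 ≤ p.2 ∧ ∃ w : E × ℝ, ∀ q : E × ℝ, φ q.1 ≤ q.2 → q ≠ p →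
        0 < ⟪q.1 - p.1, w.1⟫ + (q.2 - p.2) * w.2) ↔
      φ p.1 = p.2 ∧ ∃ x, ∀ y ≠ p.1, ((p.2 + ⟪y - p.1, x⟫ : ℝ) : EReal) < φ y := by
  obtain ⟨y₀, s₀⟩ := p
  constructor
  · rintro ⟨hepi, w, hw⟩
    have hw2 : 0 < w.2 := by
      simpa using hw (y₀, s₀ + 1) (hepi.trans (EReal.coe_le_coe_iff.2 (by linarith))) (by simp)
    refine ⟨le_antisymm hepi (not_lt.1 fun hlt => ?_), -(w.2)⁻¹ • w.1, fun y hy => ?_⟩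
    · obtain ⟨c, hc, hcs⟩ := EReal.exists_between_coe_real hlt
      rw [EReal.coe_lt_coe_iff] at hcs
      have := hw (y₀, c) hc.le (by simp [hcs.ne])
      simp only [sub_self, inner_zero_left, zero_add] at this
      nlinarith
    · by_contra! hle
      have := hw (y, _) hle (by simp [hy])
      simp only [add_sub_cancel_left, real_inner_smul_right] at this
      have hcancel : -(w.2)⁻¹ * ⟪y - y₀, w.1⟫ * w.2 = -⟪y - y₀, w.1⟫ := by field_simp
      linarith
  · rintro ⟨hs, x, hx⟩
    refine ⟨hs.le, (-x, 1), fun ⟨y, s⟩ hq hne => ?_⟩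
    simp only [inner_neg_right, mul_one]
    rcases eq_or_ne y y₀ with rfl | hy
    · have : s₀ < s := lt_of_le_of_ne (by exact_mod_cast hs ▸ hq) fun h => hne (by rw [h])
      simp only [sub_self, inner_zero_left]
      linarith
    · have := EReal.coe_lt_coe_iff.1 ((hx y hy).trans_le hq)
      linarith

section Subgradient

variable {g : E → ℝ} {s t U : Set E} {x₀ y y₀ v : E}

def IsSubgradientOn (g : E → ℝ) (s : Set E) (x₀ y : E) : Prop :=
  ∀ x ∈ s, g x₀ + ⟪x - x₀, y⟫ ≤ g x

theorem IsSubgradientOn.eq_of_hasGradientAt [CompleteSpace E] (hy : IsSubgradientOn g s x₀ y)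
    (hs : s ∈ 𝓝 x₀) (hg : HasGradientAt g y₀ x₀) : y = y₀ := by
  have hmin : IsLocalMin (fun x => g x - toDual ℝ E y x) x₀ :=
    Filter.eventually_of_mem hs fun x hx => by
      have := hy x hx
      simp only [toDual_apply_apply, real_inner_comm y, inner_sub_right] at this ⊢
      linarith
  have hderiv := (hasGradientAt_iff_hasFDerivAt.1 hg).sub (toDual ℝ E y).hasFDerivAt
  rw [← map_sub] at hderiv
  exact (sub_eq_zero.1 ((toDual ℝ E).map_eq_zero_iff.1 (hmin.hasFDerivAt_eq_zero hderiv))).symm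

theorem ConvexOn.isSubgradientOn_of_hasGradientAt [CompleteSpace E] (hg : ConvexOn ℝ s g)
    (hx₀ : x₀ ∈ s) (hgrad : HasGradientAt g y₀ x₀) : IsSubgradientOn g s x₀ y₀ := by
  intro x hx
  have hderiv : HasDerivAt (g ∘ AffineMap.lineMap (k := ℝ) x₀ x) ⟪x - x₀, y₀⟫ 0 := by
    have hfd : HasFDerivAt g (toDual ℝ E y₀) (AffineMap.lineMap x₀ x (0 : ℝ)) := by
      simpa using hasGradientAt_iff_hasFDerivAt.1 hgrad
    simpa [toDual_apply_apply, real_inner_comm] using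
      hfd.comp_hasDerivAt (0 : ℝ) AffineMap.hasDerivAt_lineMap
  have := (hg.comp_affineMap (AffineMap.lineMap x₀ x)).le_slope_of_hasDerivAt
    (by simpa using hx₀) (by simpa using hx) zero_lt_one hderiv
  simp only [slope_def_field, Function.comp_apply, AffineMap.lineMap_apply_zero,
    AffineMap.lineMap_apply_one, sub_zero, div_one] at this
  linarith

theorem ConvexOn.isSubgradientOn_of_mem_nhds (hg : ConvexOn ℝ s g) (hx₀ : x₀ ∈ s) (ht : t ∈ 𝓝 x₀)
    (hy : IsSubgradientOn g (s ∩ t) x₀ y) : IsSubgradientOn g s x₀ y := by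
  intro x hx
  have hnear : ∀ᶠ τ in 𝓝[>] (0 : ℝ), x₀ + τ • (x - x₀) ∈ t ∧ τ < 1 := by
    refine ((Continuous.tendsto' (by fun_prop) 0 x₀ (by simp)).eventually ht).filter_mono
      nhdsWithin_le_nhds |>.and ?_
    filter_upwards [Ioo_mem_nhdsGT (zero_lt_one' ℝ)] with τ hτ using hτ.2
  obtain ⟨τ, ⟨hτt, hτ1⟩, hτ0 : 0 < τ⟩ := (hnear.and self_mem_nhdsWithin).exists
  have hcomb : (1 - τ) • x₀ + τ • x = x₀ + τ • (x - x₀) := by module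
  have h1τ : 0 ≤ 1 - τ := by linarith
  have hconv := hg.2 hx₀ hx h1τ hτ0.le (sub_add_cancel 1 τ)
  have hsub := hy _ ⟨hcomb ▸ hg.1 hx₀ hx h1τ hτ0.le (sub_add_cancel 1 τ), hτt⟩
  rw [hcomb, smul_eq_mul, smul_eq_mul] at hconv
  rw [add_sub_cancel_left, real_inner_smul_left] at hsub
  nlinarith

theorem IsSubgradientOn.mem_interior_of_forall_eq [CompleteSpace E] (hs : Convex ℝ s)
    (hsint : (interior s).Nonempty) (hy₀ : IsSubgradientOn g s x₀ y₀)
    (huniq : ∀ y, IsSubgradientOn g s x₀ y → y = y₀) : x₀ ∈ interior s := by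
  by_contra hx₀
  obtain ⟨ℓ, hℓ0, hℓ⟩ := geometric_hahn_banach_of_nonempty_interior_point hs hx₀ hsint
  have hshift : y₀ + (toDual ℝ E).symm ℓ = y₀ := huniq _ fun x hx => by
    have h1 := hy₀ x hx
    have h2 : ⟪x - x₀, (toDual ℝ E).symm ℓ⟫ = ℓ x - ℓ x₀ := by
      rw [real_inner_comm, toDual_symm_apply, map_sub]
    rw [inner_add_right, h2]
    linarith [hℓ x hx]
  exact hℓ0 (by simpa using hshift)

theorem ConvexOn.exists_isSubgradientOn_inner_eq [CompleteSpace E] {m : ℝ} (hg : ConvexOn ℝ U g)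
    (hU : IsOpen U) (hcont : ContinuousOn g U) (hx₀ : x₀ ∈ U)
    (hm : ∀ t : ℝ, x₀ + t • v ∈ U → g x₀ + t * m ≤ g (x₀ + t • v)) :
    ∃ y, IsSubgradientOn g U x₀ y ∧ ⟪v, y⟫ = m := by
  set C := {p : E × ℝ | p.1 ∈ U ∧ g p.1 < p.2}
  set L := range fun t : ℝ => (x₀ + t • v, g x₀ + t * m)
  have hC : IsOpen C := by
    have hF : ContinuousOn (fun p : E × ℝ => g p.1 - p.2) (Prod.fst ⁻¹' U) :=
      (hcont.comp continuousOn_fst (mapsTo_preimage _ _)).sub continuousOn_snd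
    convert hF.isOpen_inter_preimage (hU.preimage continuous_fst) (isOpen_Iio (a := 0)) using 1
    ext p
    simp [C, sub_neg]
  have hL : Convex ℝ L := by
    rintro _ ⟨s, rfl⟩ _ ⟨t, rfl⟩ a b - - hab
    obtain rfl : b = 1 - a := by linarith
    refine ⟨a * s + (1 - a) * t, Prod.ext ?_ ?_⟩
    · simp only [Prod.smul_mk, Prod.mk_add_mk]
      module
    · simp only [Prod.smul_mk, Prod.mk_add_mk, smul_eq_mul]
      ring
  have hCL : Disjoint C L := by
    rw [Set.disjoint_right]
    rintro _ ⟨t, rfl⟩ ⟨ht, hlt⟩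
    exact (hm t ht).not_gt hlt
  obtain ⟨ℓ, u, hℓC, hℓL⟩ := geometric_hahn_banach_open hg.convex_strict_epigraph hC hL hCL
  obtain ⟨a, c, hℓ⟩ := ℓ.exists_eq_inner_add_mul
  have hline : ∀ t : ℝ, u ≤ ⟪x₀, a⟫ + c * g x₀ + t * (⟪v, a⟫ + c * m) := fun t => by
    have := hℓL _ ⟨t, rfl⟩
    rw [hℓ, inner_add_left, real_inner_smul_left] at this
    linarith
  -- a linear function of `t` bounded below on all of `ℝ` is constant
  have hslope : ⟪v, a⟫ + c * m = 0 := by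
    by_contra hk
    have := hline ((u - (⟪x₀, a⟫ + c * g x₀) - 1) / (⟪v, a⟫ + c * m))
    rw [div_mul_cancel₀ _ hk] at this
    linarith
  have hc : c < 0 := by
    have := hℓC (x₀, g x₀ + 1) ⟨hx₀, by linarith⟩
    rw [hℓ] at this
    linarith [hline 0]
  refine ⟨(-c)⁻¹ • a, fun x hx => le_of_forall_pos_lt_add fun ε hε => ?_, ?_⟩
  · have := hℓC (x, g x + ε) ⟨hx, by linarith⟩
    rw [hℓ] at this
    have hlt : ⟪x, a⟫ - ⟪x₀, a⟫ < -c * (g x + ε - g x₀) := by linarith [hline 0]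
    have : (-c)⁻¹ * (⟪x, a⟫ - ⟪x₀, a⟫) < g x + ε - g x₀ := by
      rw [inv_mul_lt_iff₀ (neg_pos.2 hc)]
      linarith
    rw [real_inner_smul_right, inner_sub_left]
    linarith
  · rw [real_inner_smul_right, inv_mul_eq_iff_eq_mul₀ (neg_ne_zero.2 hc.ne)]
    linarith

theorem ConvexOn.hasLineDerivAt_of_forall_isSubgradientOn_eq [FiniteDimensional ℝ E]
    (hg : ConvexOn ℝ U g) (hU : IsOpen U) (hx₀ : x₀ ∈ U)
    (huniq : ∀ y, IsSubgradientOn g U x₀ y → y = y₀) (v : E) : HasLineDerivAt ℝ g ⟪v, y₀⟫ x₀ v := by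
  set φ : ℝ → ℝ := fun t => g (x₀ + t • v)
  have hS : IsOpen {t : ℝ | x₀ + t • v ∈ U} := hU.preimage (by fun_prop)
  have h0 : (0 : ℝ) ∈ interior {t : ℝ | x₀ + t • v ∈ U} := by
    rw [hS.interior_eq]
    simpa using hx₀
  have hφ : ConvexOn ℝ {t : ℝ | x₀ + t • v ∈ U} φ := by
    have hline : ∀ t : ℝ, AffineMap.lineMap x₀ (x₀ + v) t = x₀ + t • v := fun t => by
      simp [AffineMap.lineMap_apply_module', add_comm]
    have := hg.comp_affineMap (AffineMap.lineMap x₀ (x₀ + v))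
    rwa [show ⇑(AffineMap.lineMap x₀ (x₀ + v)) = fun t : ℝ => x₀ + t • v from funext hline] at this
  -- every slope between the one-sided derivatives is the slope of a subgradient along `v`
  have hslope : ∀ m, derivWithin φ (Iio 0) 0 ≤ m → m ≤ derivWithin φ (Ioi 0) 0 → m = ⟪v, y₀⟫ := by
    intro m hl hr
    obtain ⟨y, hy, rfl⟩ := hg.exists_isSubgradientOn_inner_eq hU (hg.continuousOn hU) hx₀
      fun t ht => by simpa [φ] using hφ.add_mul_le_of_leftDeriv_le_of_le_rightDeriv h0 ht hl hr
    rw [huniq y hy]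
  have hlr := hφ.leftDeriv_le_rightDeriv_of_mem_interior h0
  have hleft := hφ.hasDerivWithinAt_leftDeriv_of_mem_interior h0
  have hright := hφ.hasDerivWithinAt_rightDeriv_of_mem_interior h0
  rw [hslope _ le_rfl hlr] at hleft
  rw [hslope _ hlr le_rfl] at hright
  have := hleft.union hright
  rwa [Iio_union_Ioi, compl_eq_univ_sdiff, hasDerivWithinAt_sdiff_singleton,
    hasDerivWithinAt_univ] at this

theorem ConvexOn.hasGradientAt_of_forall_isSubgradientOn_eq [FiniteDimensional ℝ E]
    (hg : ConvexOn ℝ U g) (hU : IsOpen U) (hx₀ : x₀ ∈ U)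
    (huniq : ∀ y, IsSubgradientOn g U x₀ y → y = y₀) : HasGradientAt g y₀ x₀ := by
  obtain ⟨K, t, ht, hK⟩ := hg.locallyLipschitzOn hU hx₀
  rw [hU.nhdsWithin_eq hx₀] at ht
  rw [hasGradientAt_iff_hasFDerivAt]
  refine hK.hasFDerivAt_of_forall_hasLineDerivAt ht fun v => ?_
  simpa [toDual_apply_apply, real_inner_comm] using
    hg.hasLineDerivAt_of_forall_isSubgradientOn_eq hU hx₀ huniq v

end Subgradient

end InnerProductSpace

section Conjugate

variable {d : ℕ} {f : Euc d → EReal} {x₀ y₀ y : Euc d}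

theorem fconj_le_coe_iff {β : ℝ} : fconj f y ≤ β ↔ ∀ x, ((⟪x, y⟫ - β : ℝ) : EReal) ≤ f x := by
  refine iSup_le_iff.trans (forall_congr' fun x => ?_)
  induction f x using EReal.rec <;> simp [← EReal.coe_sub, add_comm]

theorem coe_inner_sub_le_fconj {ρ : ℝ} (hρ : f x₀ = ρ) :
    ((⟪x₀, y⟫ - ρ : ℝ) : EReal) ≤ fconj f y := by
  calc ((⟪x₀, y⟫ - ρ : ℝ) : EReal) = ((⟪x₀, y⟫ : ℝ) : EReal) - f x₀ := by rw [hρ, EReal.coe_sub]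
    _ ≤ fconj f y := le_iSup (fun x => ((⟪x, y⟫ : ℝ) : EReal) - f x) x₀

theorem mem_subdiff_iff_fconj_le {ρ : ℝ} (hρ : f x₀ = ρ) :
    y ∈ subdiff f x₀ ↔ fconj f y ≤ ((⟪x₀, y⟫ - ρ : ℝ) : EReal) := by
  rw [fconj_le_coe_iff]
  simp only [subdiff, Set.mem_ofPred_eq, hρ, ← EReal.coe_add]
  constructor
  · intro h x
    have := h (x - x₀)
    rwa [add_sub_cancel, inner_sub_left,
      show ⟪x, y⟫ - ⟪x₀, y⟫ + ρ = ⟪x, y⟫ - (⟪x₀, y⟫ - ρ) by ring] at this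
  · intro h z
    have := h (x₀ + z)
    rwa [inner_add_left, show ⟪x₀, y⟫ + ⟪z, y⟫ - (⟪x₀, y⟫ - ρ) = ⟪z, y⟫ + ρ by ring] at this

theorem fconj_le_of_separation {a : Euc d} {c u : ℝ} (hc : 0 < c)
    (hsep : ∀ z (t : ℝ), f z ≤ t → u < ⟪z, a⟫ + c * t) :
    fconj f (-c⁻¹ • a) ≤ ((-u / c : ℝ) : EReal) := by
  rw [fconj_le_coe_iff]
  refine fun z => EReal.le_of_forall_lt_iff_le.1 fun t ht => ?_
  have := hsep z t ht.le
  rw [EReal.coe_le_coe_iff, real_inner_smul_right]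
  field_simp
  linarith

end Conjugate

namespace ClosedConvexFun

variable {d : ℕ} {f : Euc d → EReal} {x₀ y₀ : Euc d}

theorem coe_toRealFun_s11 (hf : ClosedConvexFun f) {x : Euc d} (hx : f x ≠ ⊤) :
    ((toRealFun f x : ℝ) : EReal) = f x :=
  EReal.coe_toReal hx (hf.2.1 x)

theorem convexOn_toRealFun_s11 (hf : ClosedConvexFun f) : ConvexOn ℝ (effDom f) (toRealFun f) := by
  have hcomb : ∀ x ∈ effDom f, ∀ y ∈ effDom f, ∀ a b : ℝ, 0 ≤ a → 0 ≤ b → a + b = 1 →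
      f (a • x + b • y) ≤ ((a * toRealFun f x + b * toRealFun f y : ℝ) : EReal) := by
    intro x hx y hy a b ha hb hab
    rw [EReal.coe_add, EReal.coe_mul, EReal.coe_mul, hf.coe_toRealFun_s11 hx, hf.coe_toRealFun_s11 hy]
    exact hf.2.2.2 x y a b ha hb hab
  have hdom : Convex ℝ (effDom f) := fun x hx y hy a b ha hb hab =>
    ((hcomb x hx y hy a b ha hb hab).trans_lt (EReal.coe_lt_top _)).ne
  refine ⟨hdom, fun x hx y hy a b ha hb hab => ?_⟩
  have := hcomb x hx y hy a b ha hb hab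
  rw [← hf.coe_toRealFun_s11 (hdom hx hy ha hb hab)] at this
  exact_mod_cast this

theorem mem_subdiff_iff (hf : ClosedConvexFun f) (hx₀ : f x₀ ≠ ⊤) {y : Euc d} :
    y ∈ subdiff f x₀ ↔ IsSubgradientOn (toRealFun f) (effDom f) x₀ y := by
  rw [mem_subdiff_iff_fconj_le (hf.coe_toRealFun_s11 hx₀).symm, fconj_le_coe_iff]
  constructor
  · intro h x hx
    have := h x
    rw [← hf.coe_toRealFun_s11 hx, EReal.coe_le_coe_iff] at this
    rw [inner_sub_left]
    linarith
  · intro h x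
    by_cases hx : f x = ⊤
    · simp [hx]
    · rw [← hf.coe_toRealFun_s11 hx, EReal.coe_le_coe_iff]
      have := h x hx
      rw [inner_sub_left] at this
      linarith

theorem isClosed_epigraph (hf : ClosedConvexFun f) : IsClosed {p : Euc d × ℝ | f p.1 ≤ p.2} :=
  hf.1.isClosed_epigraph.preimage
    (continuous_fst.prodMk (continuous_coe_real_ereal.comp continuous_snd))

theorem convex_epigraph (hf : ClosedConvexFun f) : Convex ℝ {p : Euc d × ℝ | f p.1 ≤ p.2} := by
  convert hf.convexOn_toRealFun_s11.convex_epigraph using 1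
  ext ⟨z, t⟩
  refine ⟨fun (h : f z ≤ t) => ?_, fun ⟨hz, h⟩ => ?_⟩
  · have hz : f z ≠ ⊤ := (h.trans_lt (EReal.coe_lt_top t)).ne
    rw [← hf.coe_toRealFun_s11 hz, EReal.coe_le_coe_iff] at h
    exact ⟨hz, h⟩
  · show f z ≤ t
    rw [← hf.coe_toRealFun_s11 hz]
    exact_mod_cast h

theorem exists_separation (hf : ClosedConvexFun f) {x : Euc d} {r : ℝ} (h : (r : EReal) < f x) :
    ∃ (a : Euc d) (c u : ℝ), 0 ≤ c ∧ ⟪x, a⟫ + c * r < u ∧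
      ∀ z (t : ℝ), f z ≤ t → u < ⟪z, a⟫ + c * t := by
  obtain ⟨ℓ, u, hxr, hepi⟩ :=
    geometric_hahn_banach_point_closed hf.convex_epigraph hf.isClosed_epigraph (x := (x, r))
      (not_le.2 h)
  obtain ⟨a, c, hℓ⟩ := ℓ.exists_eq_inner_add_mul
  have hsep : ∀ z (t : ℝ), f z ≤ t → u < ⟪z, a⟫ + c * t := fun z t hz => hℓ z t ▸ hepi (z, t) hz
  refine ⟨a, c, u, not_lt.1 fun hc => ?_, hℓ x r ▸ hxr, hsep⟩
  -- the epigraph contains vertical rays, on which `c < 0` would make `ℓ` unbounded below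
  obtain ⟨x₁, hx₁⟩ := hf.2.2.1
  have := hsep x₁ (max (toRealFun f x₁) ((u - ⟪x₁, a⟫) / c))
    (by rw [← hf.coe_toRealFun_s11 hx₁]; exact_mod_cast le_max_left _ _)
  have := mul_le_mul_of_nonpos_left (le_max_right (toRealFun f x₁) ((u - ⟪x₁, a⟫) / c)) hc.le
  rw [mul_div_cancel₀ _ hc.ne] at this
  linarith

theorem exists_fconj_le_coe (hf : ClosedConvexFun f) : ∃ (y : Euc d) (β : ℝ), fconj f y ≤ β := by
  obtain ⟨x₁, hx₁⟩ := hf.2.2.1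
  obtain ⟨a, c, u, hc, hxr, hsep⟩ := hf.exists_separation (x := x₁) (r := toRealFun f x₁ - 1)
    (by rw [← hf.coe_toRealFun_s11 hx₁]; exact_mod_cast sub_one_lt _)
  have := hsep x₁ (toRealFun f x₁) (hf.coe_toRealFun_s11 hx₁).ge
  have hc : 0 < c := hc.lt_of_ne (by rintro rfl; linarith)
  exact ⟨_, _, fconj_le_of_separation hc hsep⟩

theorem exists_fconj_le_of_lt (hf : ClosedConvexFun f) {x : Euc d} {r : ℝ}
    (h : (r : EReal) < f x) : ∃ (y : Euc d) (β : ℝ), fconj f y ≤ β ∧ r < ⟪x, y⟫ - β := by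
  obtain ⟨a, c, u, hc, hxr, hsep⟩ := hf.exists_separation h
  rcases hc.lt_or_eq with hc | rfl
  · refine ⟨_, _, fconj_le_of_separation hc hsep, ?_⟩
    rw [real_inner_smul_right]
    field_simp
    linarith
  -- vertical separation: tilt an arbitrary affine minorant by a large multiple of `-a`
  obtain ⟨y', β', hy'⟩ := hf.exists_fconj_le_coe
  simp only [zero_mul, add_zero] at hxr hsep
  obtain ⟨n, hn⟩ := exists_nat_gt ((r - ⟪x, y'⟫ + β') / (u - ⟪x, a⟫))
  rw [div_lt_iff₀ (by linarith)] at hn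
  refine ⟨y' - (n : ℝ) • a, β' - n * u, ?_, ?_⟩
  · rw [fconj_le_coe_iff] at hy' ⊢
    refine fun z => EReal.le_of_forall_lt_iff_le.1 fun t ht => ?_
    have h1 := EReal.coe_le_coe_iff.1 ((hy' z).trans ht.le)
    have h2 := mul_le_mul_of_nonneg_left (hsep z t ht.le).le n.cast_nonneg
    rw [EReal.coe_le_coe_iff, inner_sub_right, real_inner_smul_right]
    linarith
  · rw [inner_sub_right, real_inner_smul_right]
    linarith

-- `f ≤ f**` (Fenchel–Moreau)
theorem le_of_forall_coe_inner_sub_le_fconj (hf : ClosedConvexFun f) {ρ : ℝ}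
    (h : ∀ y, ((⟪x₀, y⟫ - ρ : ℝ) : EReal) ≤ fconj f y) : f x₀ ≤ ρ := by
  by_contra! hlt
  obtain ⟨y, β, hyβ, hβ⟩ := hf.exists_fconj_le_of_lt hlt
  linarith [EReal.coe_le_coe_iff.1 ((h y).trans hyβ)]

theorem forall_lt_fconj_iff (hf : ClosedConvexFun f) {s₀ : ℝ} (hs : fconj f y₀ = s₀) :
    (∀ y ≠ y₀, ((s₀ + ⟪y - y₀, x₀⟫ : ℝ) : EReal) < fconj f y) ↔
      f x₀ ≠ ⊤ ∧ subdiff f x₀ = {y₀} := by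
  have hshift : ∀ y, s₀ + ⟪y - y₀, x₀⟫ = ⟪x₀, y⟫ - (⟪x₀, y₀⟫ - s₀) := fun y => by
    rw [inner_sub_left, real_inner_comm x₀, real_inner_comm x₀]
    ring
  simp only [hshift]
  constructor
  · intro hlt
    have hle : f x₀ ≤ ((⟪x₀, y₀⟫ - s₀ : ℝ) : EReal) :=
      hf.le_of_forall_coe_inner_sub_le_fconj fun y => by
        rcases eq_or_ne y y₀ with rfl | hy
        · simp [hs]
        · exact (hlt y hy).le
    have hx₀ : f x₀ ≠ ⊤ := (hle.trans_lt (EReal.coe_lt_top _)).ne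
    have hρ := (hf.coe_toRealFun_s11 hx₀).symm
    have hρ₀ : toRealFun f x₀ = ⟪x₀, y₀⟫ - s₀ := by
      have := coe_inner_sub_le_fconj (y := y₀) hρ
      rw [hs, EReal.coe_le_coe_iff] at this
      rw [hρ, EReal.coe_le_coe_iff] at hle
      linarith
    refine ⟨hx₀, Set.ext fun y => ?_⟩
    rw [mem_subdiff_iff_fconj_le hρ, hρ₀, mem_singleton_iff]
    refine ⟨fun h => not_imp_comm.1 (hlt y) h.not_gt, ?_⟩
    rintro rfl
    simp [hs]
  · rintro ⟨hx₀, hsub⟩ y hy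
    have hρ := (hf.coe_toRealFun_s11 hx₀).symm
    have hy₀ := (mem_subdiff_iff_fconj_le hρ).1 (hsub ▸ mem_singleton y₀)
    have hρ₀ : ⟪x₀, y₀⟫ - s₀ = toRealFun f x₀ := by
      have := coe_inner_sub_le_fconj (y := y₀) hρ
      rw [hs, EReal.coe_le_coe_iff] at this hy₀
      linarith
    rw [hρ₀]
    refine (coe_inner_sub_le_fconj hρ).lt_of_ne fun heq => hy ?_
    rw [← mem_singleton_iff, ← hsub, mem_subdiff_iff_fconj_le hρ]
    exact heq.ge

theorem mem_domGrad_and_gradient_eq_iff (hf : ClosedConvexFun f)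
    (hD : (interior (effDom f)).Nonempty) :
    (x₀ ∈ domGrad f ∧ gradient (toRealFun f) x₀ = y₀) ↔ f x₀ ≠ ⊤ ∧ subdiff f x₀ = {y₀} := by
  have hconv := hf.convexOn_toRealFun_s11
  constructor
  · rintro ⟨⟨hint, hdiff⟩, rfl⟩
    have hx₀ : f x₀ ≠ ⊤ := interior_subset hint
    refine ⟨hx₀, eq_singleton_iff_unique_mem.2 ⟨?_, fun y hy => ?_⟩⟩
    · exact (hf.mem_subdiff_iff hx₀).2
        (hconv.isSubgradientOn_of_hasGradientAt hx₀ hdiff.hasGradientAt)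
    · exact ((hf.mem_subdiff_iff hx₀).1 hy).eq_of_hasGradientAt
        (mem_interior_iff_mem_nhds.1 hint) hdiff.hasGradientAt
  · rintro ⟨hx₀, hsub⟩
    have huniq : ∀ y, IsSubgradientOn (toRealFun f) (effDom f) x₀ y → y = y₀ := fun y hy => by
      rw [← mem_singleton_iff, ← hsub]
      exact (hf.mem_subdiff_iff hx₀).2 hy
    have hint := ((hf.mem_subdiff_iff hx₀).1 (hsub ▸ mem_singleton y₀)).mem_interior_of_forall_eq
      hconv.1 hD huniq
    have hgrad := (hconv.subset interior_subset hconv.1.interior)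
      |>.hasGradientAt_of_forall_isSubgradientOn_eq isOpen_interior hint fun y hy =>
        huniq y <| hconv.isSubgradientOn_of_mem_nhds hx₀ (isOpen_interior.mem_nhds hint)
          (by rwa [inter_eq_right.2 interior_subset])
    exact ⟨⟨hint, hgrad.differentiableAt⟩, hgrad.gradient⟩

end ClosedConvexFun

/-- Proposition 1 of the paper: `{(y, f*(y)) : y ∈ range ∇f}` is the set of
exposed points of `epi f*`. -/
theorem stmt11 {d : ℕ} (f : Euc d → EReal) (hf : ClosedConvexFun f)
    (hD : (interior (effDom f)).Nonempty) :
    {p : Euc d × ℝ | p.1 ∈ gradRange f ∧ (p.2 : EReal) = fconj f p.1} =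
      {p : Euc d × ℝ | fconj f p.1 ≤ (p.2 : EReal) ∧
        ∃ w : Euc d × ℝ, ∀ q : Euc d × ℝ,
          fconj f q.1 ≤ (q.2 : EReal) → q ≠ p →
            0 < ⟪q.1 - p.1, w.1⟫ + (q.2 - p.2) * w.2} := by
  ext ⟨y₀, s₀⟩
  simp only [Set.mem_ofPred_eq, exposed_point_epigraph_iff, gradRange, mem_image,
    eq_comm (a := (s₀ : EReal))]
  rw [and_comm]
  refine and_congr_right fun hs => exists_congr fun x₀ => ?_
  rw [hf.mem_domGrad_and_gradient_eq_iff hD, hf.forall_lt_fconj_iff hs]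
end
end

section
/- Let S be an invertible symmetric d×d real matrix, let j ∈ {1,…,d}, let C be a compact set in ℝ^d with y^j = 1 for all y ∈ C, let h(x) = x^j + g₁(x^{−j}) − g₂(x^{−j}) with g₁, g₂ convex of linear growth on ℝ^{d−1}, and let H := {x ∈ ℝ^d : h(Sx) = 0}. Then h ∈ H^j_C if and only if for every x ∈ H there exists an S-normal vector w ∈ C to H at x. -/
open Filter Topology Set Pointwise
open scoped RealInnerProductSpace

noncomputable section

/-! Write `h z = z j + φ (dropCoord j z)` with `φ = g₁ - g₂`. Then `{h = 0}` is the graph of `-φ`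
over the remaining coordinates, `H` is its preimage under `x ↦ S x`, and the `S`-normals to `H`
at `x` are exactly the Euclidean normals to `{h = 0}` at `S x`. A convex function with
`|g x| ≤ K (1 + ‖x‖)` is `K`-Lipschitz and all its subgradients have norm at most `K`.

If `∇h ∈ C` wherever `g₁, g₂` are differentiable: by Rademacher such points are dense, `∇h` is a
regular normal to `{h = 0}` there, and compactness of `C` yields a limiting normal in `C`.

Conversely, a regular normal `w` to the graph with `w j > 0` makes `(w j)⁻¹ • dropCoord j w` a
Fréchet subgradient of `φ`; adding a subgradient of `g₂` gives a Fréchet, hence global,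
subgradient of the convex `g₁`. Limits of such subgradients at a point where `g₁` and `g₂` are
differentiable are their gradients, so a limiting normal `w ∈ C` (where `w j = 1`) is `∇h`. -/

section Subgradient

variable {E : Type*} [NormedAddCommGroup E] [InnerProductSpace ℝ E]

def HasSubgradientAt (g : E → ℝ) (q u : E) : Prop :=
  ∀ v, g u + ⟪q, v - u⟫ ≤ g v

/-- `g v ≥ g u + ⟪q, v - u⟫ - o(‖v - u‖)` as `v → u`. -/
def HasFrechetSubgradientAt (g : E → ℝ) (q u : E) : Prop :=
  ∀ ε > 0, ∀ᶠ v in 𝓝 u, ⟪q, v - u⟫ - ε * ‖v - u‖ ≤ g v - g u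

variable {f g : E → ℝ} {p q u : E}

theorem HasSubgradientAt.hasFrechetSubgradientAt (hq : HasSubgradientAt g q u) :
    HasFrechetSubgradientAt g q u := fun ε hε ↦
  Eventually.of_forall fun v ↦ by nlinarith [hq v, norm_nonneg (v - u)]

theorem HasFrechetSubgradientAt.add (hf : HasFrechetSubgradientAt f p u)
    (hg : HasFrechetSubgradientAt g q u) : HasFrechetSubgradientAt (f + g) (p + q) u := by
  intro ε hε
  filter_upwards [hf (ε / 2) (by positivity), hg (ε / 2) (by positivity)] with v hfv hgv
  simp only [Pi.add_apply, inner_add_left]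
  linarith

/-- `g - ⟪q, ·⟫ + ε ‖· - u‖` is convex with a local, hence global, minimum at `u`. -/
theorem HasFrechetSubgradientAt.hasSubgradientAt (hg : ConvexOn ℝ univ g)
    (hq : HasFrechetSubgradientAt g q u) : HasSubgradientAt g q u := by
  have hrelaxed : ∀ ε > 0, ∀ v, g u + ⟪q, v - u⟫ ≤ g v + ε * ‖v - u‖ := by
    intro ε hε v
    let F : E → ℝ := fun v ↦ g v + ⟪-q, v⟫ + ε * dist v u
    have hF : ConvexOn ℝ univ F :=
      (hg.add ((innerSL ℝ (-q)).toLinearMap.convexOn convex_univ)).add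
        ((convexOn_dist u convex_univ).smul hε.le)
    have hmin : IsLocalMin F u := by
      filter_upwards [hq ε hε] with v hv
      simp only [F, inner_neg_left, dist_eq_norm, sub_self, norm_zero, inner_sub_right] at hv ⊢
      linarith
    have := IsMinOn.of_isLocalMin_of_convex_univ hmin hF v
    simp only [F, inner_neg_left, dist_eq_norm, sub_self, norm_zero] at this
    rw [inner_sub_right]
    linarith
  intro v
  refine le_of_forall_pos_le_add fun ε hε ↦ ?_
  have hc : 0 < ‖v - u‖ + 1 := by positivity
  have hsmall : ε / (‖v - u‖ + 1) * ‖v - u‖ ≤ ε := by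
    rw [div_mul_eq_mul_div, div_le_iff₀ hc]
    nlinarith
  linarith [hrelaxed (ε / (‖v - u‖ + 1)) (by positivity) v]

/-- Separate `(u, g u)` from the open convex strict epigraph of `g` by a hyperplane; it is not
vertical, and its slope is the subgradient. -/
theorem ConvexOn.exists_hasSubgradientAt [CompleteSpace E] (hg : ConvexOn ℝ univ g)
    (hc : Continuous g) (u : E) : ∃ q, HasSubgradientAt g q u := by
  have hopen : IsOpen {p : E × ℝ | g p.1 < p.2} :=
    isOpen_lt (hc.comp continuous_fst) continuous_snd
  obtain ⟨f, hf⟩ := geometric_hahn_banach_open_point (by simpa using hg.convex_strict_epigraph)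
    hopen (x := (u, g u)) (lt_irrefl (g u))
  have hsplit : ∀ v t, f (v, t) = f (v, 0) + t * f (0, 1) := fun v t ↦ by
    rw [← smul_eq_mul, ← map_smul, ← map_add, Prod.smul_mk, smul_zero, smul_eq_mul, mul_one,
      Prod.mk_add_mk, add_zero, zero_add]
  have hvert : f (0, 1) < 0 := by
    have := hf (u, g u + 1) (by simp)
    rw [hsplit, hsplit u (g u)] at this
    linarith
  refine ⟨(-f (0, 1))⁻¹ • (InnerProductSpace.toDual ℝ E).symm (f.comp (.inl ℝ E ℝ)), fun v ↦ ?_⟩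
  refine le_of_forall_gt_imp_ge_of_dense fun t ht ↦ ?_
  have := hf (v, t) ht
  rw [hsplit, hsplit u (g u)] at this
  rw [real_inner_smul_left, InnerProductSpace.toDual_symm_apply, ContinuousLinearMap.comp_apply,
    ContinuousLinearMap.inl_apply, ← le_sub_iff_add_le', inv_mul_le_iff₀ (by linarith),
    ← sub_zero (0 : ℝ), ← Prod.mk_sub_mk, map_sub]
  nlinarith

/-- Test the subgradient inequality at `u + t • q` for large `t`. -/
theorem HasSubgradientAt.norm_le {K : ℝ} (hG : ∀ x, |g x| ≤ K * (1 + ‖x‖))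
    (hq : HasSubgradientAt g q u) : ‖q‖ ≤ K := by
  have hK : 0 ≤ K := by nlinarith [abs_nonneg (g 0), hG 0, norm_nonneg (0 : E)]
  have hray : ∀ t > 0, t * (‖q‖ * (‖q‖ - K)) ≤ 2 * K * (1 + ‖u‖) := by
    intro t ht
    have h₁ := hq (u + t • q)
    rw [add_sub_cancel_left, real_inner_smul_right, real_inner_self_eq_norm_sq] at h₁
    have h₂ : ‖u + t • q‖ ≤ ‖u‖ + t * ‖q‖ := by
      simpa [norm_smul, abs_of_pos ht] using norm_add_le u (t • q)
    nlinarith [abs_le.1 (hG (u + t • q)), abs_le.1 (hG u)]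
  by_contra! hlt
  have hpos : 0 < ‖q‖ * (‖q‖ - K) := mul_pos (by linarith) (by linarith)
  have := hray ((2 * K * (1 + ‖u‖) + 1) / (‖q‖ * (‖q‖ - K))) (by positivity)
  rw [div_mul_cancel₀ _ hpos.ne'] at this
  linarith

theorem ConvexOn.lipschitzWith_of_abs_le_linear [FiniteDimensional ℝ E] {K : ℝ}
    (hg : ConvexOn ℝ univ g) (hG : ∀ x, |g x| ≤ K * (1 + ‖x‖)) : LipschitzWith K.toNNReal g := by
  refine LipschitzWith.of_le_add_mul' K fun x y ↦ ?_
  obtain ⟨q, hq⟩ := hg.exists_hasSubgradientAt hg.locallyLipschitz.continuous x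
  have := hq y
  rw [dist_comm, dist_eq_norm]
  have hinner := neg_le_of_abs_le (abs_real_inner_le_norm q (y - x))
  nlinarith [mul_le_mul_of_nonneg_right (hq.norm_le hG) (norm_nonneg (y - x))]

theorem HasSubgradientAt.eq_gradient [CompleteSpace E] (hq : HasSubgradientAt g q u)
    (hd : DifferentiableAt ℝ g u) : q = gradient g u := by
  have hmin : IsLocalMin (fun v ↦ g v - ⟪q, v⟫) u :=
    Eventually.of_forall fun v ↦ by have := hq v; rw [inner_sub_right] at this; linarith
  have hzero := hmin.hasFDerivAt_eq_zero (hd.hasFDerivAt.sub (innerSL ℝ q).hasFDerivAt)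
  rw [sub_eq_zero] at hzero
  rw [gradient, hzero]
  exact ((InnerProductSpace.toDual ℝ E).symm_apply_apply q).symm

theorem HasSubgradientAt.of_tendsto {ι : Type*} {l : Filter ι} [l.NeBot] (hc : Continuous g)
    {us qs : ι → E} (hu : Tendsto us l (𝓝 u)) (hq : Tendsto qs l (𝓝 q))
    (hsub : ∀ᶠ n in l, HasSubgradientAt g (qs n) (us n)) : HasSubgradientAt g q u := fun v ↦
  le_of_tendsto (((hc.tendsto u).comp hu).add (hq.inner (tendsto_const_nhds.sub hu)))
    (hsub.mono fun _ hn ↦ hn v)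

/-- Split off a bounded, hence subconvergent, sequence of subgradients of `g₂`; what remains are
Fréchet, hence global, subgradients of `g₁`. -/
theorem eq_gradient_sub_of_tendsto_hasFrechetSubgradientAt [FiniteDimensional ℝ E]
    {g₁ g₂ : E → ℝ} {K : ℝ} (hg₁ : ConvexOn ℝ univ g₁) (hg₂ : ConvexOn ℝ univ g₂)
    (hG₂ : ∀ x, |g₂ x| ≤ K * (1 + ‖x‖)) {us rs : ℕ → E} {r : E}
    (hu : Tendsto us atTop (𝓝 u)) (hr : Tendsto rs atTop (𝓝 r))
    (hsub : ∀ᶠ n in atTop, HasFrechetSubgradientAt (g₁ - g₂) (rs n) (us n))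
    (hd₁ : DifferentiableAt ℝ g₁ u) (hd₂ : DifferentiableAt ℝ g₂ u) :
    r = gradient g₁ u - gradient g₂ u := by
  have hc₁ := hg₁.locallyLipschitz.continuous
  have hc₂ := hg₂.locallyLipschitz.continuous
  choose qs hqs using fun n ↦ hg₂.exists_hasSubgradientAt hc₂ (us n)
  obtain ⟨q, -, ψ, hψ, hqψ⟩ := (isCompact_closedBall (0 : E) K).tendsto_subseq
    (x := qs) fun n ↦ mem_closedBall_zero_iff.2 ((hqs n).norm_le hG₂)
  have huψ := hu.comp hψ.tendsto_atTop
  have h₂ : HasSubgradientAt g₂ q u :=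
    .of_tendsto hc₂ huψ hqψ (Eventually.of_forall fun n ↦ hqs (ψ n))
  have h₁ : HasSubgradientAt g₁ (r + q) u := by
    refine .of_tendsto hc₁ huψ ((hr.comp hψ.tendsto_atTop).add hqψ) ?_
    filter_upwards [hψ.tendsto_atTop.eventually hsub] with n hn
    have hsum := hn.add (hqs (ψ n)).hasFrechetSubgradientAt
    rw [sub_add_cancel] at hsum
    exact hsum.hasSubgradientAt hg₁
  rw [← h₁.eq_gradient hd₁, ← h₂.eq_gradient hd₂, add_sub_cancel_right]

theorem LipschitzWith.exists_seq_tendsto_differentiableAt [FiniteDimensional ℝ E]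
    [MeasurableSpace E] [BorelSpace E] {K₁ K₂ : NNReal} {g₁ g₂ : E → ℝ}
    (h₁ : LipschitzWith K₁ g₁) (h₂ : LipschitzWith K₂ g₂) (u : E) :
    ∃ us : ℕ → E, (∀ n, DifferentiableAt ℝ g₁ (us n) ∧ DifferentiableAt ℝ g₂ (us n)) ∧
      Tendsto us atTop (𝓝 u) := by
  have hdense : Dense {v | DifferentiableAt ℝ g₁ v ∧ DifferentiableAt ℝ g₂ v} :=
    MeasureTheory.Measure.dense_of_ae (μ := MeasureTheory.Measure.addHaar)
      ((h₁.ae_differentiableAt).and h₂.ae_differentiableAt)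
  exact mem_closure_iff_seq_limit.1 (hdense.closure_eq ▸ mem_univ u)

end Subgradient

section LittleO

variable {E F : Type*} [NormedAddCommGroup E] [NormedSpace ℝ E] [NormedAddCommGroup F]
  [NormedSpace ℝ F]

/-- `Φ y ≤ o(‖y - x‖)` as `y → x` within `s \ {x}`. -/
def UpperLittleO (s : Set E) (x : E) (Φ : E → ℝ) : Prop :=
  ∀ ε > 0, ∃ δ > 0, ∀ y ∈ s, y ≠ x → ‖y - x‖ < δ → Φ y ≤ ε * ‖y - x‖

theorem UpperLittleO.comp_continuousLinearEquiv {Z : Set F} {x : E} {z : F} {Φ : F → ℝ}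
    (h : UpperLittleO Z z Φ) (L : E ≃L[ℝ] F) (hx : L x = z) :
    UpperLittleO (L ⁻¹' Z) x (Φ ∘ L) := by
  subst hx
  intro ε hε
  set c := ‖(L : E →L[ℝ] F)‖ + 1
  have hc : 0 < c := by positivity
  obtain ⟨δ, hδ, hΦ⟩ := h (ε / c) (by positivity)
  refine ⟨δ / c, by positivity, fun y hy hne hlt ↦ ?_⟩
  have hLy : ‖L y - L x‖ ≤ c * ‖y - x‖ := by
    rw [← map_sub]
    exact (L : E →L[ℝ] F).le_opNorm (y - x) |>.trans (by gcongr; linarith)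
  calc Φ (L y) ≤ ε / c * ‖L y - L x‖ :=
        hΦ _ hy (L.injective.ne hne) (hLy.trans_lt (by rwa [← lt_div_iff₀' hc]))
    _ ≤ ε / c * (c * ‖y - x‖) := by gcongr
    _ = ε * ‖y - x‖ := by field_simp

end LittleO

section MatrixChange

variable {k : ℕ} {S : Matrix (Fin k) (Fin k) ℝ}

theorem matVec_eq_toLp_mulVec (M : Matrix (Fin k) (Fin k) ℝ) (y : Euc k) :
    matVec M y = WithLp.toLp 2 (M.mulVec y.ofLp) := rfl

def matVecEquiv (hS : IsUnit S.det) : Euc k ≃L[ℝ] Euc k :=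
  LinearEquiv.toContinuousLinearEquiv
    { Matrix.toEuclideanLin S with
      invFun := matVec S⁻¹
      left_inv := fun y ↦ by
        change matVec S⁻¹ (matVec S y) = y
        simp [matVec_eq_toLp_mulVec, Matrix.mulVec_mulVec, Matrix.nonsing_inv_mul S hS]
      right_inv := fun y ↦ by
        change matVec S (matVec S⁻¹ y) = y
        simp [matVec_eq_toLp_mulVec, Matrix.mulVec_mulVec, Matrix.mul_nonsing_inv S hS] }

theorem sbil_eq_inner_matVec (x y : Euc k) : Sbil S x y = ⟪x, matVec S y⟫ := by
  simp only [Sbil, matVec, PiLp.inner_apply, RCLike.inner_apply, conj_trivial, Finset.sum_mul]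
  exact Finset.sum_congr rfl fun _ _ ↦ Finset.sum_congr rfl fun _ _ ↦ by ring

theorem sRegNormal_preimage_iff (hS : IsUnit S.det) {Z : Set (Euc k)} {x w : Euc k} :
    SRegNormal S (matVecEquiv hS ⁻¹' Z) x w ↔ RegNormal Z (matVec S x) w := by
  set A := matVecEquiv hS
  have hiff : SRegNormal S (A ⁻¹' Z) x w ↔
      UpperLittleO (A ⁻¹' Z) x ((fun z ↦ ⟪w, z - A x⟫) ∘ A) := by
    simp only [SRegNormal, UpperLittleO, Function.comp_apply, sbil_eq_inner_matVec, ← map_sub]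
    rfl
  rw [hiff]
  refine ⟨fun h ↦ ?_, fun h ↦ UpperLittleO.comp_continuousLinearEquiv h A rfl⟩
  have := h.comp_continuousLinearEquiv A.symm (A.symm_apply_apply x)
  exact (by simpa [Function.comp_def] using this : UpperLittleO Z (A x) fun z ↦ ⟪w, z - A x⟫)

theorem sNormal_preimage_iff (hS : IsUnit S.det) {Z : Set (Euc k)} {x w : Euc k} :
    SNormal S (matVecEquiv hS ⁻¹' Z) x w ↔ NormalVec Z (matVec S x) w := by
  set A := matVecEquiv hS
  constructor
  · rintro ⟨xs, ws, hreg, hxs, hws⟩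
    exact ⟨fun n ↦ A (xs n), ws, fun n ↦ ⟨(hreg n).1, (sRegNormal_preimage_iff hS).1 (hreg n).2⟩,
      (A.continuous.tendsto x).comp hxs, hws⟩
  · rintro ⟨zs, ws, hreg, hzs, hws⟩
    have hxs := (A.symm.continuous.tendsto (A x)).comp hzs
    rw [A.symm_apply_apply] at hxs
    refine ⟨fun n ↦ A.symm (zs n), ws, fun n ↦ ?_, hxs, hws⟩
    have hA : matVec S (A.symm (zs n)) = zs n := A.apply_symm_apply (zs n)
    exact ⟨by simpa [A] using (hreg n).1, (sRegNormal_preimage_iff hS).2 (hA ▸ (hreg n).2)⟩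

end MatrixChange

theorem regNormal_of_hasGradientAt {k : ℕ} {f : Euc k → ℝ} {W z : Euc k}
    (hf : HasGradientAt f W z) : RegNormal {y | f y = f z} z W := by
  intro ε hε
  obtain ⟨δ, hδ, hball⟩ :=
    Metric.eventually_nhds_iff.1 ((hasGradientAt_iff_isLittleO.1 hf).def hε)
  refine ⟨δ, hδ, fun y hy _ hyz ↦ ?_⟩
  have := hball (by rwa [dist_eq_norm])
  replace hy : f y = f z := hy
  simp only [hy, sub_self, zero_sub, norm_neg, Real.norm_eq_abs] at this
  exact (le_abs_self _).trans this

theorem IsCompact.exists_normalVec_of_tendsto {k : ℕ} {C Z : Set (Euc k)} (hC : IsCompact C)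
    {z : Euc k} {zs ws : ℕ → Euc k} (hzs : Tendsto zs atTop (𝓝 z))
    (hreg : ∀ n, zs n ∈ Z ∧ RegNormal Z (zs n) (ws n)) (hwC : ∀ n, ws n ∈ C) :
    ∃ w ∈ C, NormalVec Z z w := by
  obtain ⟨w, hw, ψ, hψ, hwψ⟩ := hC.tendsto_subseq hwC
  exact ⟨w, hw, zs ∘ ψ, ws ∘ ψ, fun n ↦ hreg (ψ n), hzs.comp hψ.tendsto_atTop, hwψ⟩

section Coordinates

variable {d : ℕ} (j : Fin (d + 1))

def insertCoord (a : ℝ) (u : Euc d) : Euc (d + 1) :=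
  WithLp.toLp 2 (Fin.insertNth j a u.ofLp)

@[simp] theorem insertCoord_apply_self (a : ℝ) (u : Euc d) : insertCoord j a u j = a := by
  simp [insertCoord]

@[simp] theorem dropCoord_insertCoord (a : ℝ) (u : Euc d) :
    dropCoord j (insertCoord j a u) = u := by
  ext m
  simp [dropCoord, insertCoord]

theorem insertCoord_apply_dropCoord (z : Euc (d + 1)) :
    insertCoord j (z j) (dropCoord j z) = z :=
  congrArg (WithLp.toLp 2) (Fin.insertNth_self_removeNth j z.ofLp)

theorem insertCoord_sub_insertCoord (a b : ℝ) (u v : Euc d) :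
    insertCoord j a u - insertCoord j b v = insertCoord j (a - b) (u - v) := by
  ext i
  simp [insertCoord, Fin.insertNth_sub]

def dropCoordL : Euc (d + 1) →L[ℝ] Euc d :=
  LinearMap.toContinuousLinearMap
    { toFun := dropCoord j
      map_add' := fun _ _ ↦ rfl
      map_smul' := fun _ _ ↦ rfl }

@[simp] theorem dropCoordL_apply (z : Euc (d + 1)) : dropCoordL j z = dropCoord j z := rfl

theorem continuous_dropCoord : Continuous (dropCoord j : Euc (d + 1) → Euc d) :=
  (dropCoordL j).continuous

theorem inner_insertCoord_left (a : ℝ) (u : Euc d) (z : Euc (d + 1)) :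
    ⟪insertCoord j a u, z⟫ = a * z j + ⟪u, dropCoord j z⟫ := by
  simp only [PiLp.inner_apply, RCLike.inner_apply, conj_trivial, Fin.sum_univ_succAbove _ j]
  simp [insertCoord, dropCoord, mul_comm]

theorem inner_insertCoord_right (z : Euc (d + 1)) (a : ℝ) (u : Euc d) :
    ⟪z, insertCoord j a u⟫ = z j * a + ⟪dropCoord j z, u⟫ := by
  rw [real_inner_comm, inner_insertCoord_left, real_inner_comm, mul_comm]

theorem norm_insertCoord_le (a : ℝ) (u : Euc d) : ‖insertCoord j a u‖ ≤ |a| + ‖u‖ := by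
  have hsq : ‖insertCoord j a u‖ ^ 2 = a ^ 2 + ‖u‖ ^ 2 := by
    rw [← real_inner_self_eq_norm_sq, inner_insertCoord_left, insertCoord_apply_self,
      dropCoord_insertCoord, real_inner_self_eq_norm_sq]
    ring
  nlinarith [sq_abs a, abs_nonneg a, norm_nonneg u, norm_nonneg (insertCoord j a u)]

end Coordinates

section Graph

variable {d : ℕ} (j : Fin (d + 1)) {φ : Euc d → ℝ}

theorem insertCoord_neg_sub_eq {z : Euc (d + 1)} (hz : z j + φ (dropCoord j z) = 0) (u : Euc d) :
    insertCoord j (-φ u) u - z =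
      insertCoord j (-(φ u - φ (dropCoord j z))) (u - dropCoord j z) := by
  conv_lhs => rw [← insertCoord_apply_dropCoord j z, show z j = -φ (dropCoord j z) by linarith]
  rw [insertCoord_sub_insertCoord, neg_sub_neg, neg_sub]

theorem norm_insertCoord_neg_sub_le {K : NNReal} (hφ : LipschitzWith K φ) {z : Euc (d + 1)}
    (hz : z j + φ (dropCoord j z) = 0) (u : Euc d) :
    ‖insertCoord j (-φ u) u - z‖ ≤ (1 + K) * ‖u - dropCoord j z‖ := by
  rw [insertCoord_neg_sub_eq j hz]
  refine (norm_insertCoord_le j _ _).trans ?_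
  rw [abs_neg, ← Real.dist_eq, ← dist_eq_norm]
  linarith [hφ.dist_le_mul u (dropCoord j z)]

/-- Test `w` at the graph points over `u` near `dropCoord j z`, whose distance to `z` is at most
`(1 + K) ‖u - dropCoord j z‖`. -/
theorem hasFrechetSubgradientAt_of_regNormal {K : NNReal} (hφ : LipschitzWith K φ)
    {z w : Euc (d + 1)} (hz : z j + φ (dropCoord j z) = 0)
    (hw : RegNormal {y | y j + φ (dropCoord j y) = 0} z w) (hwj : 0 < w j) :
    HasFrechetSubgradientAt φ ((w j)⁻¹ • dropCoord j w) (dropCoord j z) := by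
  set u₀ := dropCoord j z
  have hc : (0 : ℝ) < 1 + K := by positivity
  intro ε hε
  obtain ⟨δ, hδ, hwδ⟩ := hw (ε * w j / (1 + K)) (by positivity)
  filter_upwards [Metric.ball_mem_nhds u₀ (div_pos hδ hc)] with u hu
  rw [Metric.mem_ball, dist_eq_norm] at hu
  rcases eq_or_ne u u₀ with rfl | hne
  · simp
  have hdiff := insertCoord_neg_sub_eq j hz u
  have hnorm := norm_insertCoord_neg_sub_le j hφ hz u
  have hmem : insertCoord j (-φ u) u ∈ {y | y j + φ (dropCoord j y) = 0} := by simp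
  have hne' : insertCoord j (-φ u) u ≠ z := fun h ↦ hne (by simpa using congrArg (dropCoord j) h)
  have := hwδ _ hmem hne' (by
    calc _ ≤ (1 + K) * ‖u - u₀‖ := hnorm
      _ < (1 + K) * (δ / (1 + K)) := by gcongr
      _ = δ := mul_div_cancel₀ _ hc.ne')
  rw [hdiff] at this hnorm
  rw [inner_insertCoord_right] at this
  have hbound : ε * w j / (1 + K) * ‖insertCoord j (-(φ u - φ u₀)) (u - u₀)‖
      ≤ ε * w j * ‖u - u₀‖ :=
    calc _ ≤ ε * w j / (1 + K) * ((1 + K) * ‖u - u₀‖) := by gcongr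
      _ = _ := by field_simp
  rw [real_inner_smul_left, ← mul_le_mul_iff_right₀ hwj, mul_sub, ← mul_assoc,
    mul_inv_cancel₀ hwj.ne', one_mul]
  linarith

variable {g₁ g₂ : Euc d → ℝ}

theorem hasGradientAt_coord_add_sub_comp_dropCoord {x : Euc (d + 1)}
    (hd₁ : DifferentiableAt ℝ g₁ (dropCoord j x)) (hd₂ : DifferentiableAt ℝ g₂ (dropCoord j x)) :
    HasGradientAt (fun z ↦ z j + (g₁ - g₂) (dropCoord j z))
      (insertCoord j 1 (gradient g₁ (dropCoord j x) - gradient g₂ (dropCoord j x))) x := by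
  have hF := (EuclideanSpace.proj j).hasFDerivAt.add
    ((hd₁.hasGradientAt.hasFDerivAt.sub hd₂.hasGradientAt.hasFDerivAt).comp x
      (dropCoordL j).hasFDerivAt)
  refine hasGradientAt_iff_hasFDerivAt.2 (hF.congr_fderiv ?_)
  ext z
  simp [inner_insertCoord_left, inner_sub_left]

theorem exists_normalVec_of_forall_gradient_mem {K₁ K₂ : NNReal} (hg₁ : LipschitzWith K₁ g₁)
    (hg₂ : LipschitzWith K₂ g₂) {C : Set (Euc (d + 1))} (hC : IsCompact C)
    (hgrad : ∀ x, DifferentiableAt ℝ g₁ (dropCoord j x) → DifferentiableAt ℝ g₂ (dropCoord j x) →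
      gradient (fun z ↦ z j + (g₁ - g₂) (dropCoord j z)) x ∈ C)
    {z : Euc (d + 1)} (hz : z j + (g₁ - g₂) (dropCoord j z) = 0) :
    ∃ w ∈ C, NormalVec {y | y j + (g₁ - g₂) (dropCoord j y) = 0} z w := by
  obtain ⟨us, hdiff, hus⟩ := hg₁.exists_seq_tendsto_differentiableAt hg₂ (dropCoord j z)
  let zs n := insertCoord j (-(g₁ - g₂) (us n)) (us n)
  have hzs : Tendsto zs atTop (𝓝 z) := by
    rw [tendsto_iff_norm_sub_tendsto_zero]
    refine squeeze_zero (fun _ ↦ norm_nonneg _)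
      (fun n ↦ norm_insertCoord_neg_sub_le j (hg₁.sub hg₂) hz (us n)) ?_
    simpa using ((tendsto_iff_norm_sub_tendsto_zero.1 hus).const_mul (1 + (K₁ + K₂ : ℝ)))
  have hdiff_zs n : DifferentiableAt ℝ g₁ (dropCoord j (zs n)) ∧
      DifferentiableAt ℝ g₂ (dropCoord j (zs n)) := by simpa [zs] using hdiff n
  refine hC.exists_normalVec_of_tendsto hzs (fun n ↦ ⟨by simp [zs], ?_⟩)
    (fun n ↦ hgrad _ (hdiff_zs n).1 (hdiff_zs n).2)
  have := (hasGradientAt_coord_add_sub_comp_dropCoord j (hdiff_zs n).1 (hdiff_zs n).2)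
  rw [this.gradient]
  simpa [zs] using regNormal_of_hasGradientAt this

theorem gradient_mem_of_forall_exists_normalVec {K₁ K₂ : ℝ} (hg₁ : ConvexOn ℝ univ g₁)
    (hg₂ : ConvexOn ℝ univ g₂) (hG₁ : ∀ u, |g₁ u| ≤ K₁ * (1 + ‖u‖))
    (hG₂ : ∀ u, |g₂ u| ≤ K₂ * (1 + ‖u‖)) {C : Set (Euc (d + 1))} (hC1 : ∀ y ∈ C, y j = 1)
    (hN : ∀ z ∈ {y | y j + (g₁ - g₂) (dropCoord j y) = 0},
      ∃ w ∈ C, NormalVec {y | y j + (g₁ - g₂) (dropCoord j y) = 0} z w)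
    {x : Euc (d + 1)} (hd₁ : DifferentiableAt ℝ g₁ (dropCoord j x))
    (hd₂ : DifferentiableAt ℝ g₂ (dropCoord j x)) :
    gradient (fun z ↦ z j + (g₁ - g₂) (dropCoord j z)) x ∈ C := by
  set u := dropCoord j x
  obtain ⟨w, hwC, zs, ws, hreg, hzs, hws⟩ := hN (insertCoord j (-(g₁ - g₂) u) u) (by simp)
  have hwj : w j = 1 := hC1 w hwC
  suffices dropCoord j w = gradient g₁ u - gradient g₂ u by
    rwa [(hasGradientAt_coord_add_sub_comp_dropCoord j hd₁ hd₂).gradient, ← this, ← hwj,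
      insertCoord_apply_dropCoord]
  have hwsj : Tendsto (fun n ↦ ws n j) atTop (𝓝 1) :=
    hwj ▸ ((EuclideanSpace.proj j).continuous.tendsto w).comp hws
  refine eq_gradient_sub_of_tendsto_hasFrechetSubgradientAt hg₁ hg₂ hG₂
    (us := fun n ↦ dropCoord j (zs n)) (rs := fun n ↦ (ws n j)⁻¹ • dropCoord j (ws n))
    ?_ ?_ ?_ hd₁ hd₂
  · simpa [u, Function.comp_def] using ((continuous_dropCoord j).tendsto _).comp hzs
  · simpa using (hwsj.inv₀ one_ne_zero).smul (((continuous_dropCoord j).tendsto w).comp hws)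
  · filter_upwards [hwsj.eventually (lt_mem_nhds one_pos)] with n hn
    exact hasFrechetSubgradientAt_of_regNormal j
      ((hg₁.lipschitzWith_of_abs_le_linear hG₁).sub (hg₂.lipschitzWith_of_abs_le_linear hG₂))
      (hreg n).1 (hreg n).2 hn

end Graph

theorem stmt13_general {d : ℕ} (S : Matrix (Fin (d + 1)) (Fin (d + 1)) ℝ)
    (hinv : IsUnit S.det)
    (j : Fin (d + 1)) (C : Set (Euc (d + 1)))
    (hC : IsCompact C) (hC1 : ∀ y ∈ C, y j = 1)
    (g₁ g₂ : Euc d → ℝ)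
    (hg₁ : ConvexOn ℝ Set.univ g₁) (hg₂ : ConvexOn ℝ Set.univ g₂)
    (hl₁ : LinGrowth g₁) (hl₂ : LinGrowth g₂)
    (h : Euc (d + 1) → ℝ)
    (hh : ∀ x, h x = x j + g₁ (dropCoord j x) - g₂ (dropCoord j x))
    (H : Set (Euc (d + 1))) (hH : H = {x | h (matVec S x) = 0}) :
    (∀ x : Euc (d + 1), DifferentiableAt ℝ g₁ (dropCoord j x) →
        DifferentiableAt ℝ g₂ (dropCoord j x) → gradient h x ∈ C) ↔
      ∀ x ∈ H, ∃ w ∈ C, SNormal S H x w := by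
  obtain ⟨K₁, -, hG₁⟩ := hl₁
  obtain ⟨K₂, -, hG₂⟩ := hl₂
  obtain rfl : h = fun z ↦ z j + (g₁ - g₂) (dropCoord j z) :=
    funext fun z ↦ (hh z).trans (add_sub_assoc _ _ _)
  obtain rfl : H = matVecEquiv hinv ⁻¹' {z | z j + (g₁ - g₂) (dropCoord j z) = 0} := hH
  constructor
  · intro hgrad x hx
    obtain ⟨w, hwC, hw⟩ := exists_normalVec_of_forall_gradient_mem j
      (hg₁.lipschitzWith_of_abs_le_linear hG₁) (hg₂.lipschitzWith_of_abs_le_linear hG₂) hC hgrad hx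
    exact ⟨w, hwC, (sNormal_preimage_iff hinv).2 hw⟩
  · intro hN x hd₁ hd₂
    refine gradient_mem_of_forall_exists_normalVec j hg₁ hg₂ hG₁ hG₂ hC1 (fun z hz ↦ ?_) hd₁ hd₂
    obtain ⟨x, rfl⟩ := (matVecEquiv hinv).surjective z
    obtain ⟨w, hwC, hw⟩ := hN x hz
    exact ⟨w, hwC, (sNormal_preimage_iff hinv).1 hw⟩

/-- Lemma 7 of the paper. -/
theorem stmt13 {d : ℕ} (S : Matrix (Fin (d + 1)) (Fin (d + 1)) ℝ)
    (hsymm : S.IsSymm) (hinv : IsUnit S.det)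
    (j : Fin (d + 1)) (C : Set (Euc (d + 1)))
    (hC : IsCompact C) (hC1 : ∀ y ∈ C, y j = 1)
    (g₁ g₂ : Euc d → ℝ)
    (hg₁ : ConvexOn ℝ Set.univ g₁) (hg₂ : ConvexOn ℝ Set.univ g₂)
    (hl₁ : LinGrowth g₁) (hl₂ : LinGrowth g₂)
    (h : Euc (d + 1) → ℝ)
    (hh : ∀ x, h x = x j + g₁ (dropCoord j x) - g₂ (dropCoord j x))
    (H : Set (Euc (d + 1))) (hH : H = {x | h (matVec S x) = 0}) :
    (∀ x : Euc (d + 1), DifferentiableAt ℝ g₁ (dropCoord j x) →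
        DifferentiableAt ℝ g₂ (dropCoord j x) → gradient h x ∈ C) ↔
      ∀ x ∈ H, ∃ w ∈ C, SNormal S H x w :=
  stmt13_general S hinv j C hC hC1 g₁ g₂ hg₁ hg₂ hl₁ hl₂ h hh H hH
end
end

section
/- Let 1 ≤ m ≤ d and let Λ be the canonical bilinear form on ℝ^d, Λ(x,y) = Σ_{i=1}^m x^i y^i − Σ_{i=m+1}^d x^i y^i. A closed set G ⊂ ℝ^d is Λ-monotone (i.e., Λ(x−y, x−y) ≥ 0 for all x, y ∈ G) if and only if G = {(u, f(u)) : u ∈ D} is the graph of a 1-Lipschitz function f : D → ℝ^{d−m}, i.e., |f(u) − f(v)| ≤ |u − v| for u, v ∈ D, where D is a closed set in ℝ^m. Moreover, G is maximal Λ-monotone (not properly contained in another Λ-monotone set) if and only if D = ℝ^m. -/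
open Filter Topology Set Pointwise
open scoped RealInnerProductSpace

noncomputable section

/-!
Since `Λ(p - q, p - q) = ‖p.1 - q.1‖² - ‖p.2 - q.2‖²`, a set is `Λ`-monotone exactly when its
second coordinate is a `1`-Lipschitz function `f` of the first on the projection `D` of the
set; when the set is closed, so is `D`, because `f` maps Cauchy sequences to Cauchy sequences.

A graph over `D ≠ ℝ^m` is not maximal by Kirszbraun's theorem for one new point: for `u ∉ D`
there is `v` with `‖v - f x‖ ≤ ‖u - x‖` on `D`, so `(u, v)` can be added. By compactness of
balls it suffices to treat finitely many points `x_i`, with `y_i = f x_i`. Minimise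
`w ↦ max_i ‖w - y_i‖ / ‖u - x_i‖` over the convex hull of the `y_i`. At a minimiser `v` with
value `λ > 1`, `v` lies in the convex hull of the active `y_i`, since moving towards the nearest
point of that hull decreases every active ratio. Write `v = ∑ w_i y_i` over active indices, where
`‖v - y_i‖ = λ ‖u - x_i‖ > ‖u - x_i‖`. The identity
`‖∑ w_i a_i‖² = ∑ w_i ‖a_i‖² - ½ ∑ w_i w_j ‖a_i - a_j‖²` for `a_i = y_i - v` (left side `0`)
and for `a_i = u - x_i` (left side `≥ 0`), with `‖y_i - y_j‖ ≤ ‖x_i - x_j‖`, then gives `0 > 0`.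
-/

section Kirszbraun

variable {E F : Type*} [NormedAddCommGroup E] [InnerProductSpace ℝ E]
  [NormedAddCommGroup F] [InnerProductSpace ℝ F]

theorem norm_sum_smul_sq_eq {ι : Type*} (s : Finset ι) (w : ι → ℝ) (a : ι → E)
    (hw : ∑ i ∈ s, w i = 1) :
    ‖∑ i ∈ s, w i • a i‖ ^ 2 =
      ∑ i ∈ s, w i * ‖a i‖ ^ 2 - (∑ i ∈ s, ∑ j ∈ s, w i * w j * ‖a i - a j‖ ^ 2) / 2 := by
  have hsq : ‖∑ i ∈ s, w i • a i‖ ^ 2 = ∑ i ∈ s, ∑ j ∈ s, w i * w j * ⟪a i, a j⟫ := by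
    rw [← real_inner_self_eq_norm_sq, sum_inner]
    simp_rw [inner_sum, real_inner_smul_left, real_inner_smul_right, mul_assoc]
  have hleft : ∑ i ∈ s, ∑ j ∈ s, w i * w j * ‖a i‖ ^ 2 = ∑ i ∈ s, w i * ‖a i‖ ^ 2 := by
    calc _ = (∑ i ∈ s, w i * ‖a i‖ ^ 2) * ∑ j ∈ s, w j := by
          rw [Finset.sum_mul_sum]
          exact Finset.sum_congr rfl fun _ _ => Finset.sum_congr rfl fun _ _ => by ring
      _ = _ := by rw [hw, mul_one]
  have hright : ∑ i ∈ s, ∑ j ∈ s, w i * w j * ‖a j‖ ^ 2 = ∑ i ∈ s, w i * ‖a i‖ ^ 2 := by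
    calc _ = (∑ i ∈ s, w i) * ∑ j ∈ s, w j * ‖a j‖ ^ 2 := by
          rw [Finset.sum_mul_sum]
          exact Finset.sum_congr rfl fun _ _ => Finset.sum_congr rfl fun _ _ => by ring
      _ = _ := by rw [hw, one_mul]
  simp only [norm_sub_sq_real, mul_sub, mul_add, Finset.sum_sub_distrib, Finset.sum_add_distrib,
    hleft, hright, hsq, mul_left_comm _ (2 : ℝ), ← Finset.mul_sum]
  ring

theorem exists_norm_sum_smul_sub_le {ι : Type*} [Fintype ι] (x : ι → E) (y : ι → F) (u : E)
    (w : ι → ℝ) (hw₀ : ∀ i, 0 ≤ w i) (hw₁ : ∑ i, w i = 1)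
    (hxy : ∀ i j, ‖y i - y j‖ ≤ ‖x i - x j‖) :
    ∃ i, ‖∑ j, w j • y j - y i‖ ≤ ‖u - x i‖ := by
  set v := ∑ j, w j • y j
  by_contra! hlt
  simp only [norm_sub_rev v] at hlt
  have hcentered : ∑ i, w i • (y i - v) = 0 := by
    simp only [smul_sub, Finset.sum_sub_distrib, ← Finset.sum_smul, hw₁, one_smul, v, sub_self]
  have hy := norm_sum_smul_sq_eq Finset.univ w (fun i => y i - v) hw₁
  have hx := norm_sum_smul_sq_eq Finset.univ w (fun i => u - x i) hw₁
  simp only [hcentered, norm_zero, sub_sub_sub_cancel_right, sub_sub_sub_cancel_left] at hy hx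
  have hpair : ∑ i, ∑ j, w i * w j * ‖y i - y j‖ ^ 2 ≤ ∑ i, ∑ j, w i * w j * ‖x j - x i‖ ^ 2 :=
    Finset.sum_le_sum fun i _ => Finset.sum_le_sum fun j _ => by
      rw [norm_sub_rev (x j)]
      exact mul_le_mul_of_nonneg_left (pow_le_pow_left₀ (norm_nonneg _) (hxy i j) 2)
        (mul_nonneg (hw₀ i) (hw₀ j))
  obtain ⟨i₀, -, hi₀⟩ := Finset.exists_ne_zero_of_sum_ne_zero (hw₁.trans_ne one_ne_zero)
  have hdist : ∑ i, w i * ‖u - x i‖ ^ 2 < ∑ i, w i * ‖y i - v‖ ^ 2 :=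
    Finset.sum_lt_sum
      (fun i _ => mul_le_mul_of_nonneg_left (pow_le_pow_left₀ (norm_nonneg _) (hlt i).le 2) (hw₀ i))
      ⟨i₀, Finset.mem_univ _, mul_lt_mul_of_pos_left
        (pow_lt_pow_left₀ (hlt i₀) (norm_nonneg _) two_ne_zero) ((hw₀ i₀).lt_of_ne' hi₀)⟩
  linarith [sq_nonneg ‖∑ i, w i • (u - x i)‖]

theorem exists_forall_norm_add_smul_sub_lt {K : Set F} (hne : K.Nonempty) (hK : IsComplete K)
    (hconv : Convex ℝ K) {v : F} (hv : v ∉ K) :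
    ∃ p ∈ K, ∀ a ∈ K, ∀ s ∈ Ioc (0 : ℝ) 1, ‖v + s • (p - v) - a‖ < ‖v - a‖ := by
  obtain ⟨p, hpK, hp⟩ := exists_norm_eq_iInf_of_complete_convex hne hK hconv v
  have hvar := (norm_eq_iInf_iff_real_inner_le_zero hconv hpK).1 hp
  have he : 0 < ‖p - v‖ := norm_pos_iff.2 (sub_ne_zero.2 (ne_of_mem_of_not_mem hpK hv))
  refine ⟨p, hpK, fun a ha s ⟨hs₀, hs₁⟩ => ?_⟩
  have hinner : ⟪v - a, p - v⟫ = ⟪v - p, a - p⟫ - ‖p - v‖ ^ 2 := by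
    rw [← real_inner_self_eq_norm_sq]
    simp only [inner_sub_left, inner_sub_right, real_inner_comm]
    ring
  have hexpand : ‖v + s • (p - v) - a‖ ^ 2 =
      ‖v - a‖ ^ 2 + 2 * s * ⟪v - a, p - v⟫ + s ^ 2 * ‖p - v‖ ^ 2 := by
    rw [show v + s • (p - v) - a = (v - a) + s • (p - v) by abel, norm_add_sq_real,
      real_inner_smul_right, norm_smul, Real.norm_of_nonneg hs₀.le]
    ring
  refine lt_of_pow_lt_pow_left₀ 2 (norm_nonneg _) ?_
  nlinarith [hvar a ha, mul_pos hs₀ (pow_pos he 2)]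

theorem mem_convexHull_of_isMinOn_sup' {ι : Type*} {t : Finset ι} (ht : t.Nonempty) (y : ι → F)
    {r : ι → ℝ} (hr : ∀ i ∈ t, 0 < r i) {S : Set F} (hS : Convex ℝ S) (hyS : ∀ i ∈ t, y i ∈ S)
    {v : F} (hvS : v ∈ S) (hmin : IsMinOn (fun w => t.sup' ht fun i => ‖w - y i‖ / r i) S v) :
    v ∈ convexHull ℝ
      (y '' ↑{i ∈ t | ‖v - y i‖ / r i = t.sup' ht fun i => ‖v - y i‖ / r i}) := by
  set φ : F → ℝ := fun w => t.sup' ht fun i => ‖w - y i‖ / r i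
  set I := {i ∈ t | ‖v - y i‖ / r i = φ v}
  by_contra hv
  obtain ⟨i₀, hi₀, hφ⟩ := Finset.exists_mem_eq_sup' ht fun i => ‖v - y i‖ / r i
  have hne : (convexHull ℝ (y '' I)).Nonempty :=
    ⟨y i₀, subset_convexHull ℝ _ ⟨i₀, Finset.mem_filter.2 ⟨hi₀, hφ.symm⟩, rfl⟩⟩
  obtain ⟨p, hpK, hp⟩ := exists_forall_norm_add_smul_sub_lt hne
    ((I.finite_toSet.image y).isCompact_convexHull ℝ).isComplete (convex_convexHull ℝ _) hv
  have hpS : p ∈ S := convexHull_min (image_subset_iff.2 fun i hi => hyS i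
    (Finset.mem_filter.1 hi).1) hS hpK
  have hdec : ∀ᶠ s in 𝓝[>] (0 : ℝ), ∀ i ∈ t, ‖v + s • (p - v) - y i‖ / r i < φ v := by
    rw [Filter.eventually_all_finset]
    intro i hi
    by_cases hiI : i ∈ I
    · filter_upwards [Ioc_mem_nhdsGT one_pos] with s hs
      rw [← (Finset.mem_filter.1 hiI).2]
      exact div_lt_div_of_pos_right (hp _ (subset_convexHull ℝ _ ⟨i, hiI, rfl⟩) s hs) (hr i hi)
    · have hlt : ‖v - y i‖ / r i < φ v := (Finset.le_sup' (fun i => ‖v - y i‖ / r i) hi).lt_of_ne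
        fun h => hiI (Finset.mem_filter.2 ⟨hi, h⟩)
      refine Tendsto.eventually_lt_const hlt ?_
      have hcont : Continuous fun s : ℝ => ‖v + s • (p - v) - y i‖ / r i := by fun_prop
      simpa using (hcont.tendsto 0).mono_left nhdsWithin_le_nhds
  obtain ⟨s, hs, hs₀, hs₁⟩ := (hdec.and (Ioc_mem_nhdsGT one_pos)).exists
  exact (hmin (hS.add_smul_sub_mem hvS hpS ⟨hs₀.le, hs₁⟩)).not_gt ((Finset.sup'_lt_iff ht).2 hs)

theorem exists_forall_norm_sub_le_of_finset {ι : Type*} (t : Finset ι) (x : ι → E) (y : ι → F)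
    (u : E) (hxy : ∀ i ∈ t, ∀ j ∈ t, ‖y i - y j‖ ≤ ‖x i - x j‖) :
    ∃ v, ∀ i ∈ t, ‖v - y i‖ ≤ ‖u - x i‖ := by
  by_cases hu : ∃ i ∈ t, x i = u
  · obtain ⟨i, hi, rfl⟩ := hu
    exact ⟨y i, hxy i hi⟩
  rcases t.eq_empty_or_nonempty with rfl | ht
  · simp
  have hr : ∀ i ∈ t, 0 < ‖u - x i‖ := fun i hi =>
    norm_pos_iff.2 (sub_ne_zero.2 fun h => hu ⟨i, hi, h.symm⟩)
  set φ : F → ℝ := fun w => t.sup' ht fun i => ‖w - y i‖ / ‖u - x i‖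
  have hφ : Continuous φ :=
    Continuous.finset_sup'_apply ht fun i _ => by fun_prop
  have hyS : ∀ i ∈ t, y i ∈ convexHull ℝ (y '' t) :=
    fun i hi => subset_convexHull ℝ _ ⟨i, hi, rfl⟩
  obtain ⟨i₀, hi₀⟩ := ht
  obtain ⟨v, hvS, hmin⟩ := ((t.finite_toSet.image y).isCompact_convexHull ℝ).exists_isMinOn
    ⟨_, hyS i₀ hi₀⟩ hφ.continuousOn
  suffices hφv : φ v ≤ 1 from
    ⟨v, fun i hi => (div_le_one (hr i hi)).1 ((Finset.le_sup' _ hi).trans hφv)⟩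
  by_contra! hφv
  obtain ⟨κ, _, w, z, hw₀, hw₁, hz, hv⟩ := mem_convexHull_iff_exists_fintype.1
    (mem_convexHull_of_isMinOn_sup' ⟨i₀, hi₀⟩ y hr (convex_convexHull ℝ _) hyS hvS hmin)
  choose c hcI hcz using hz
  simp only [Finset.coe_filter, mem_ofPred_eq] at hcI
  obtain ⟨k, hk⟩ := exists_norm_sum_smul_sub_le (fun k => x (c k)) z u w hw₀ hw₁ fun k l => by
    simpa only [← hcz] using hxy _ (hcI k).1 _ (hcI l).1
  have hactive := (hcI k).2
  rw [div_eq_iff (hr _ (hcI k).1).ne'] at hactive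
  rw [hv, ← hcz] at hk
  nlinarith [hr _ (hcI k).1]

theorem exists_forall_norm_sub_le [ProperSpace F] (D : Set E) (f : E → F)
    (hf : ∀ a ∈ D, ∀ b ∈ D, ‖f a - f b‖ ≤ ‖a - b‖) (u : E) :
    ∃ v, ∀ x ∈ D, ‖v - f x‖ ≤ ‖u - x‖ := by
  classical
  rcases D.eq_empty_or_nonempty with rfl | ⟨x₀, hx₀⟩
  · simp
  obtain ⟨v, -, hv⟩ := (isCompact_closedBall (f x₀) ‖u - x₀‖).inter_iInter_nonempty
    (fun x : D => Metric.closedBall (f x) ‖u - x‖) (fun _ => Metric.isClosed_closedBall)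
    fun s => by
      obtain ⟨v, hv⟩ := exists_forall_norm_sub_le_of_finset (insert ⟨x₀, hx₀⟩ s) (↑)
        (fun x : D => f x) u fun a _ b _ => hf a a.2 b b.2
      refine ⟨v, ?_, mem_iInter₂.2 fun x hx => ?_⟩
      · simpa [dist_eq_norm] using hv _ (Finset.mem_insert_self _ _)
      · simpa [dist_eq_norm] using hv x (Finset.mem_insert_of_mem hx)
  exact ⟨v, fun x hx => by simpa [dist_eq_norm] using mem_iInter.1 hv ⟨x, hx⟩⟩

end Kirszbraun

section NonexpansiveGraph

variable {E F : Type*} [NormedAddCommGroup E] [NormedAddCommGroup F]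

def IsNonexpansiveGraph (G : Set (E × F)) : Prop :=
  ∀ p ∈ G, ∀ q ∈ G, ‖p.2 - q.2‖ ≤ ‖p.1 - q.1‖

theorem isNonexpansiveGraph_graphOn {D : Set E} {f : E → F}
    (hf : ∀ u ∈ D, ∀ v ∈ D, ‖f u - f v‖ ≤ ‖u - v‖) :
    IsNonexpansiveGraph {p : E × F | p.1 ∈ D ∧ p.2 = f p.1} := by
  rintro p ⟨hp, hpf⟩ q ⟨hq, hqf⟩
  rw [hpf, hqf]
  exact hf _ hp _ hq

namespace IsNonexpansiveGraph

variable {G : Set (E × F)}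

theorem snd_eq_of_fst_eq (h : IsNonexpansiveGraph G) {p q : E × F} (hp : p ∈ G) (hq : q ∈ G)
    (hpq : p.1 = q.1) : p.2 = q.2 := by
  simpa [hpq, sub_eq_zero] using h p hp q hq

theorem insert (h : IsNonexpansiveGraph G) {z : E × F}
    (hz : ∀ q ∈ G, ‖z.2 - q.2‖ ≤ ‖z.1 - q.1‖) : IsNonexpansiveGraph (insert z G) := by
  rintro p (rfl | hp) q (rfl | hq)
  · simp
  · exact hz q hq
  · rw [norm_sub_rev, norm_sub_rev p.1]
    exact hz p hp
  · exact h p hp q hq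

theorem exists_eq_graphOn (h : IsNonexpansiveGraph G) :
    ∃ f : E → F, (∀ u ∈ Prod.fst '' G, ∀ v ∈ Prod.fst '' G, ‖f u - f v‖ ≤ ‖u - v‖) ∧
      G = {p : E × F | p.1 ∈ Prod.fst '' G ∧ p.2 = f p.1} := by
  choose! g hgG hg using fun u (hu : u ∈ Prod.fst '' G) => hu
  refine ⟨fun u => (g u).2, fun u hu v hv => ?_, Set.ext fun p => ⟨fun hp => ?_, ?_⟩⟩
  · simpa only [hg u hu, hg v hv] using h _ (hgG u hu) _ (hgG v hv)
  · have hp₁ : p.1 ∈ Prod.fst '' G := ⟨p, hp, rfl⟩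
    exact ⟨hp₁, h.snd_eq_of_fst_eq hp (hgG _ hp₁) (hg _ hp₁).symm⟩
  · rintro ⟨hp₁, hp₂⟩
    convert hgG _ hp₁
    exact Prod.ext (hg _ hp₁).symm hp₂

theorem isClosed_image_fst [CompleteSpace F] (h : IsNonexpansiveGraph G) (hG : IsClosed G) :
    IsClosed (Prod.fst '' G) := by
  refine isClosed_of_closure_subset fun x hx => ?_
  obtain ⟨u, hu, hux⟩ := mem_closure_iff_seq_limit.1 hx
  choose p hpG hpu using hu
  have hcauchy : CauchySeq fun n => (p n).2 := Metric.cauchySeq_iff.2 fun ε hε => by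
    obtain ⟨N, hN⟩ := Metric.cauchySeq_iff.1 hux.cauchySeq ε hε
    refine ⟨N, fun a ha b hb => ?_⟩
    have hab := hN a ha b hb
    rw [dist_eq_norm, ← hpu, ← hpu] at hab
    rw [dist_eq_norm]
    exact (h _ (hpG a) _ (hpG b)).trans_lt hab
  obtain ⟨y, hy⟩ := cauchySeq_tendsto_of_complete hcauchy
  have hpx : Tendsto (fun n => (p n).1) atTop (𝓝 x) := by simpa only [hpu] using hux
  exact ⟨(x, y), hG.mem_of_tendsto (hpx.prodMk_nhds hy) (Eventually.of_forall hpG), rfl⟩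

theorem eq_graph_of_subset {f : E → F} (h : IsNonexpansiveGraph G)
    (hsub : {p : E × F | p.2 = f p.1} ⊆ G) : G = {p : E × F | p.2 = f p.1} :=
  Subset.antisymm (fun p hp => h.snd_eq_of_fst_eq (q := (p.1, f p.1)) hp (hsub rfl) rfl) hsub

end IsNonexpansiveGraph

theorem isNonexpansiveGraph_iff_exists_graphOn [CompleteSpace F] {G : Set (E × F)}
    (hG : IsClosed G) :
    IsNonexpansiveGraph G ↔ ∃ (D : Set E) (f : E → F), IsClosed D ∧
      (∀ u ∈ D, ∀ v ∈ D, ‖f u - f v‖ ≤ ‖u - v‖) ∧ G = {p : E × F | p.1 ∈ D ∧ p.2 = f p.1} := by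
  refine ⟨fun h => ?_, ?_⟩
  · obtain ⟨f, hf, hGf⟩ := h.exists_eq_graphOn
    exact ⟨_, f, h.isClosed_image_fst hG, hf, hGf⟩
  · rintro ⟨D, f, -, hf, rfl⟩
    exact isNonexpansiveGraph_graphOn hf

theorem maximal_isNonexpansiveGraph_iff [InnerProductSpace ℝ E] [InnerProductSpace ℝ F]
    [ProperSpace F] {G : Set (E × F)} :
    (IsNonexpansiveGraph G ∧ ∀ G', IsNonexpansiveGraph G' → G ⊆ G' → G' = G) ↔
      ∃ f : E → F, (∀ u v, ‖f u - f v‖ ≤ ‖u - v‖) ∧ G = {p : E × F | p.2 = f p.1} := by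
  refine ⟨fun ⟨h, hmax⟩ => ?_, ?_⟩
  · obtain ⟨f, hf, hGf⟩ := h.exists_eq_graphOn
    have hD : Prod.fst '' G = univ := eq_univ_of_forall fun u => by
      obtain ⟨v, hv⟩ := exists_forall_norm_sub_le _ f hf u
      have hvG : ∀ q ∈ G, ‖v - q.2‖ ≤ ‖u - q.1‖ := fun q hq => by
        obtain ⟨hq₁, hq₂⟩ : q ∈ {p : E × F | p.1 ∈ Prod.fst '' G ∧ p.2 = f p.1} := hGf ▸ hq
        rw [hq₂]
        exact hv _ hq₁
      have hins := hmax _ (h.insert (z := (u, v)) hvG) (subset_insert _ _)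
      exact ⟨(u, v), hins ▸ mem_insert _ _, rfl⟩
    refine ⟨f, fun u v => hf u (hD ▸ mem_univ u) v (hD ▸ mem_univ v), ?_⟩
    rw [hGf, hD]
    simp only [mem_univ, true_and]
  · rintro ⟨f, hf, rfl⟩
    have h : IsNonexpansiveGraph {p : E × F | p.2 = f p.1} := by
      rintro p (hp : p.2 = f p.1) q (hq : q.2 = f q.1)
      rw [hp, hq]
      exact hf _ _
    exact ⟨h, fun G' h' hsub => h'.eq_graph_of_subset hsub⟩

end NonexpansiveGraph

theorem lam_sub_self_nonneg_iff {m k : ℕ} (p q : Euc m × Euc k) :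
    0 ≤ Lam (p - q) (p - q) ↔ ‖p.2 - q.2‖ ≤ ‖p.1 - q.1‖ := by
  rw [Lam, Prod.fst_sub, Prod.snd_sub, real_inner_self_eq_norm_sq, real_inner_self_eq_norm_sq,
    sub_nonneg, sq_le_sq₀ (norm_nonneg _) (norm_nonneg _)]

theorem stmt18_general {m k : ℕ}
    (G : Set (Euc m × Euc k)) (hG : IsClosed G) :
    ((∀ p ∈ G, ∀ q ∈ G, 0 ≤ Lam (p - q) (p - q)) ↔
      ∃ (D : Set (Euc m)) (f : Euc m → Euc k), IsClosed D ∧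
        (∀ u ∈ D, ∀ v ∈ D, ‖f u - f v‖ ≤ ‖u - v‖) ∧
        G = {p : Euc m × Euc k | p.1 ∈ D ∧ p.2 = f p.1}) ∧
    (((∀ p ∈ G, ∀ q ∈ G, 0 ≤ Lam (p - q) (p - q)) ∧
        ∀ G' : Set (Euc m × Euc k),
          (∀ p ∈ G', ∀ q ∈ G', 0 ≤ Lam (p - q) (p - q)) → G ⊆ G' → G' = G) ↔
      ∃ f : Euc m → Euc k, (∀ u v : Euc m, ‖f u - f v‖ ≤ ‖u - v‖) ∧
        G = {p : Euc m × Euc k | p.2 = f p.1}) := by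
  simp only [lam_sub_self_nonneg_iff]
  exact ⟨isNonexpansiveGraph_iff_exists_graphOn hG, maximal_isNonexpansiveGraph_iff⟩

/-- Example 2 of the paper: `Λ`-monotone sets are graphs of `1`-Lipschitz
functions, and maximal ones are graphs of everywhere-defined `1`-Lipschitz
functions. -/
theorem stmt18 {m k : ℕ} (hm : 1 ≤ m)
    (G : Set (Euc m × Euc k)) (hG : IsClosed G) :
    ((∀ p ∈ G, ∀ q ∈ G, 0 ≤ Lam (p - q) (p - q)) ↔
      ∃ (D : Set (Euc m)) (f : Euc m → Euc k), IsClosed D ∧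
        (∀ u ∈ D, ∀ v ∈ D, ‖f u - f v‖ ≤ ‖u - v‖) ∧
        G = {p : Euc m × Euc k | p.1 ∈ D ∧ p.2 = f p.1}) ∧
    (((∀ p ∈ G, ∀ q ∈ G, 0 ≤ Lam (p - q) (p - q)) ∧
        ∀ G' : Set (Euc m × Euc k),
          (∀ p ∈ G', ∀ q ∈ G', 0 ≤ Lam (p - q) (p - q)) → G ⊆ G' → G' = G) ↔
      ∃ f : Euc m → Euc k, (∀ u v : Euc m, ‖f u - f v‖ ≤ ‖u - v‖) ∧
        G = {p : Euc m × Euc k | p.2 = f p.1}) :=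
  stmt18_general G hG
end
end
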